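/- arXiv:1502.05431 — 12 statements merged into one kernel-verified Lean document; each statement's English description precedes it below -/
import Mathlib

section
/- Let A be a right alternative algebra over a field of characteristic ≠ 2, i.e., (x,y,y) = (xy)y − x(yy) = 0 for all x,y ∈ A. Then A satisfies the identity of Jordan nilpotency of step 2, ((x∘y)∘z = 0 where a∘b = ab+ba), if and only if for all a,b,x ∈ A one has (a x)b = −(b x)a (i.e., the multiplication operator L_a R_b is skew-symmetric in a,b). -/
/-- A right alternative algebra over a field of char ≠ 2 satisfies
`(x∘y)∘z = 0` iff `L_a R_b` is skew-symmetric in `a, b`. -/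
theorem stmt0 {F : Type*} [Field F] (h2 : (2 : F) ≠ 0)
    {A : Type*} [NonUnitalNonAssocRing A] [Module F A]
    [SMulCommClass F A A] [IsScalarTower F A A]
    (hra : ∀ x y : A, (x * y) * y = x * (y * y)) :
    (∀ x y z : A, (x * y + y * x) * z + z * (x * y + y * x) = 0) ↔
      (∀ a b x : A, (a * x) * b = -((b * x) * a)) := by
  -- cancellation of 2
  have half : ∀ t : A, t + t = 0 → t = 0 := by
    intro t ht
    have h1 : (2 : F) • t = 0 := by rw [two_smul]; exact ht
    have h3 := congrArg (fun v => (2 : F)⁻¹ • v) h1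
    simpa [smul_smul, inv_mul_cancel₀ h2] using h3
  -- linearized right alternativity
  have hlin : ∀ z x y : A, z * (x * y) + z * (y * x) = (z * x) * y + (z * y) * x := by
    intro z x y
    have h := hra z (x + y)
    simp only [mul_add, add_mul, hra] at h
    rw [← sub_eq_zero] at h ⊢
    rw [← neg_eq_zero] at h
    rw [← h]
    abel
  constructor
  · intro J a b x
    have S : ∀ x y z : A,
        (x * y) * z + (y * x) * z + ((z * x) * y + (z * y) * x) = 0 := by
      intro x y z
      have j := J x y z
      rw [add_mul, mul_add, hlin z x y] at j
      exact j
    have h1 := S a x b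
    have h2' := S x b a
    have h3 := S a b x
    have hsum : ((a * x) * b + (b * x) * a) + ((a * x) * b + (b * x) * a) = 0 := by
      calc ((a * x) * b + (b * x) * a) + ((a * x) * b + (b * x) * a)
          = ((a * x) * b + (x * a) * b + ((b * a) * x + (b * x) * a)
            + ((x * b) * a + (b * x) * a + ((a * x) * b + (a * b) * x)))
            - ((a * b) * x + (b * a) * x + ((x * a) * b + (x * b) * a)) := by abel
        _ = (0 + 0) - 0 := by rw [h1, h2', h3]
        _ = 0 := by simp
    have := half _ hsum
    exact eq_neg_of_add_eq_zero_left this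
  · intro hs x y z
    rw [add_mul, mul_add, hlin z x y, hs x z y, hs y z x]
    abel
end

section
/- Let A be an algebra over a field of characteristic ≠ 2 satisfying the right alternative identity (x,y,y)=0, the metabelian identity (xy)(zt)=0, and the identity (x∘y)∘z=0. Then for every w ∈ A² (the span of all products) and all x,y ∈ A: ((w x) y) = 0, i.e. the relation R_x R_y = 0 holds on A². -/
/-- In a right alternative metabelian algebra with `(x∘y)∘z = 0`
over a field of char ≠ 2, the relation `R_x R_y = 0` holds on `A²`. -/
theorem stmt1 {F : Type*} [Field F] (h2 : (2 : F) ≠ 0)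
    {A : Type*} [NonUnitalNonAssocRing A] [Module F A]
    [SMulCommClass F A A] [IsScalarTower F A A]
    (hra : ∀ x y : A, (x * y) * y = x * (y * y))
    (hmb : ∀ x y z t : A, (x * y) * (z * t) = 0)
    (hjn : ∀ x y z : A, (x * y + y * x) * z + z * (x * y + y * x) = 0) :
    ∀ w ∈ Submodule.span F {u : A | ∃ p q : A, p * q = u},
      ∀ x y : A, (w * x) * y = 0 := by
  -- linearized right alternativity
  have ra : ∀ a u v : A, (a * u) * v + (a * v) * u = a * (u * v) + a * (v * u) := by
    intro a u v
    have h := hra a (u + v)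
    simp only [mul_add, add_mul] at h
    have hu := hra a u
    have hv := hra a v
    linear_combination (norm := abel1) h - hu - hv
  -- expanded Jordan-nilpotency identity
  have jn : ∀ u v z : A, (u * v) * z + (v * u) * z + z * (u * v) + z * (v * u) = 0 := by
    intro u v z
    have h := hjn u v z
    simp only [add_mul, mul_add] at h
    linear_combination (norm := abel1) h
  -- key: ((p*q)*x)*y = 0 for all p q x y
  have key : ∀ p q x y : A, ((p * q) * x) * y = 0 := by
    intro p q x y
    have m1 := hmb p q x y
    have m2 := hmb p q y x
    have m3 := hmb x y p q
    have r1 := ra (p * q) x y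
    have r2 := ra x (p * q) y
    have r3 := ra y (p * q) x
    have j1 := jn (p * q) x y
    have j2 := jn (p * q) y x
    have j3 := jn x y (p * q)
    have hTT : ((p * q) * x) * y + ((p * q) * x) * y = 0 := by
      linear_combination (norm := abel1) m1 + m1 + r1 + j1 + m2 + m2 - j2 - r2
        + m3 + m3 - j3 + r3
    have h2s : (2 : F) • (((p * q) * x) * y) = 0 := by
      rw [two_smul]; exact hTT
    rcases smul_eq_zero.mp h2s with h | h
    · exact absurd h h2
    · exact h
  intro w hw x y
  induction hw using Submodule.span_induction with
  | mem u hu => obtain ⟨p, q, rfl⟩ := hu; exact key p q x y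
  | zero => simp
  | add u v _ _ hu hv => rw [add_mul, add_mul, hu, hv, add_zero]
  | smul c u _ hu => rw [smul_mul_assoc, smul_mul_assoc, hu, smul_zero]
end

section
/- Let A be an algebra over a field of characteristic ≠ 2,3 satisfying (x,y,y)=0, (xy)(zt)=0, (x∘y)∘z=0, and the identity [(x,yz,x),t]=0 (where [a,b]=ab−ba). Then for every w ∈ A² and all x,y ∈ A: y(x(wx)) = 0, i.e. the operator relation R_x L_x R_y = 0 holds on A². -/
/-- Adding the identity `[(x,yz,x),t] = 0` over a field of char ≠ 2,3,
the operator relation `R_x L_x R_y = 0` holds on `A²`. -/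
theorem stmt3 {F : Type*} [Field F] (h2 : (2 : F) ≠ 0) (h3 : (3 : F) ≠ 0)
    {A : Type*} [NonUnitalNonAssocRing A] [Module F A]
    [SMulCommClass F A A] [IsScalarTower F A A]
    (hra : ∀ x y : A, (x * y) * y = x * (y * y))
    (hmb : ∀ x y z t : A, (x * y) * (z * t) = 0)
    (hjn : ∀ x y z : A, (x * y + y * x) * z + z * (x * y + y * x) = 0)
    (hcc : ∀ x y z t : A,
      ((x * (y * z)) * x - x * ((y * z) * x)) * t
        - t * ((x * (y * z)) * x - x * ((y * z) * x)) = 0) :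
    ∀ w ∈ Submodule.span F {u : A | ∃ p q : A, p * q = u},
      ∀ x y : A, (x * (w * x)) * y = 0 := by
  -- polarized right alternativity
  have ra' : ∀ a b c : A, (a*b)*c + (a*c)*b = a*(b*c) + a*(c*b) := by
    intro a b c
    have expand : ((a*b)*c + (a*c)*b) - (a*(b*c) + a*(c*b))
        = ((a*(b+c))*(b+c) - a*((b+c)*(b+c)))
          - ((a*b)*b - a*(b*b)) - ((a*c)*c - a*(c*c)) := by
      simp only [mul_add, add_mul]; abel
    rw [hra a (b+c), hra a b, hra a c] at expand
    simp only [sub_self, sub_zero, zero_sub] at expand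
    exact sub_eq_zero.mp expand
  -- key lemma for a single product w (characterized by the three properties below)
  have key : ∀ w x y : A,
      (∀ a b : A, w*(a*b) = 0) → (∀ a b : A, (a*b)*w = 0) →
      (∀ t : A, ((x*w)*x - x*(w*x))*t - t*((x*w)*x - x*(w*x)) = 0) →
      (x*(w*x))*y = 0 := by
    intro w x y wm mw hc
    have s1 : (w*x)*x = 0 := by rw [hra w x]; exact wm x x
    have s2 : ∀ a t : A, (a*w)*t = a*(w*t) + a*(t*w) := by
      intro a t
      have h := ra' a w t
      rw [mw a t, add_zero] at h
      exact h
    have s4 : (x*w)*x = x*(w*x) + x*(x*w) := s2 x x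
    have h3 := hjn x w x
    rw [add_mul, mul_add, s1, add_zero, s4] at h3
    have hS : (x*(w*x) + x*(x*w)) + (x*(w*x) + x*(x*w)) = 0 := by
      calc (x*(w*x) + x*(x*w)) + (x*(w*x) + x*(x*w))
          = (x*(w*x) + x*(x*w)) + (x*(x*w) + x*(w*x)) := by abel
        _ = 0 := h3
    have hS2 : (2:F) • (x*(w*x) + x*(x*w)) = 0 := by rw [two_smul]; exact hS
    have s5 : x*(w*x) + x*(x*w) = 0 := by
      have := congrArg (fun z => (2:F)⁻¹ • z) hS2
      simpa [inv_smul_smul₀ h2] using this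
    have s6 : (x*w)*x = 0 := by rw [s4]; exact s5
    -- commutation of x*(w*x) with everything (from hcc)
    have s7 : (x*(w*x))*y = y*(x*(w*x)) := by
      have h := hc y
      rw [s6, zero_sub, neg_mul, mul_neg, neg_sub_neg] at h
      exact (sub_eq_zero.mp h).symm
    have s8 : (y*(w*x))*x = y*(x*(w*x)) := by
      have h := ra' y x (w*x)
      rw [hmb y x w x, zero_add, s1, mul_zero, add_zero] at h
      exact h
    have s9 : (w*x)*y = -((w*y)*x) := by
      have h := ra' w x y
      rw [wm x y, wm y x, add_zero] at h
      exact eq_neg_of_add_eq_zero_left h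
    have s10 : ((w*y)*x)*x = 0 := by rw [hra (w*y) x]; exact hmb w y x x
    have s12 : ((w*x)*y)*x = 0 := by rw [s9, neg_mul, s10, neg_zero]
    have g := ra' x (w*x) y
    rw [hmb x y w x, add_zero] at g
    have j := hjn (w*x) y x
    rw [add_mul, mul_add, s12, zero_add, s8, ← g, ← s7] at j
    have j2 : (2:F) • ((x*(w*x))*y) = 0 := by rw [two_smul]; exact j
    have := congrArg (fun z => (2:F)⁻¹ • z) j2
    simpa [inv_smul_smul₀ h2] using this
  intro w hw
  induction hw using Submodule.span_induction with
  | mem u hu =>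
    obtain ⟨p, q, hpq⟩ := hu
    intro x y
    subst hpq
    exact key (p*q) x y (hmb p q) (fun a b => hmb a b p q) (fun t => hcc x p q t)
  | zero => intro x y; simp
  | add a b _ _ ha hb =>
    intro x y
    have : x*((a+b)*x) = x*(a*x) + x*(b*x) := by rw [add_mul, mul_add]
    rw [this, add_mul, ha x y, hb x y, add_zero]
  | smul c a _ ha =>
    intro x y
    rw [smul_mul_assoc, mul_smul_comm, smul_mul_assoc, ha x y, smul_zero]
end

section
/- Let 𝒜 = 𝒜₀ ⊕ 𝒜₁ be a metabelian superalgebra generated by odd elements and satisfying: 𝒜₀𝒜 = 0; [𝒜₁,𝒜₁] = 0 (odd elements commute); u_i(u_j b) = u_j(u_i b) for all generators u_i,u_j and b ∈ 𝒜₀; and u_k(u_i(u_j c) − u_j(u_i c)) = 0 for c ∈ 𝒜₁𝒜₀ and generators u_i,u_j,u_k. Then the Grassmann envelope G(𝒜) = G₀⊗𝒜₀ + G₁⊗𝒜₁ satisfies the right alternative identity (x,y,y) = 0. -/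
open TensorProduct

/-- The Grassmann algebra on countably many generators, as the exterior algebra
of a countably-infinite-dimensional vector space. -/
noncomputable abbrev GrassmannAlg (F : Type*) [Field F] := ExteriorAlgebra F (ℕ →₀ F)

/-- The even (`i = 0`) and odd (`i = 1`) parts of the Grassmann algebra. -/
noncomputable def grassmannPart (F : Type*) [Field F] (i : ZMod 2) :
    Submodule F (GrassmannAlg F) :=
  CliffordAlgebra.evenOdd (0 : QuadraticForm F (ℕ →₀ F)) i

section Grass

variable {F : Type*} [Field F]

open CliffordAlgebra

local notation "Q0" => (0 : QuadraticForm F (ℕ →₀ F))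

lemma grass_ι_anti (m m' : ℕ →₀ F) : ι Q0 m * ι Q0 m' = -(ι Q0 m' * ι Q0 m) := by
  have h := CliffordAlgebra.ι_mul_ι_add_swap (Q := Q0) m m'
  have hp : QuadraticMap.polar (⇑Q0) m m' = 0 := by
    simp [QuadraticMap.polar]
  rw [hp, map_zero] at h
  exact eq_neg_of_add_eq_zero_left h

lemma grass_ι_swap (m m' : ℕ →₀ F) (x : GrassmannAlg F) :
    ι Q0 m * (ι Q0 m' * x) = -(ι Q0 m' * (ι Q0 m * x)) := by
  rw [← mul_assoc, grass_ι_anti, neg_mul, mul_assoc]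

lemma grass_ι_comm0 (x : GrassmannAlg F) (hx : x ∈ grassmannPart F 0) (m : ℕ →₀ F) :
    ι Q0 m * x = x * ι Q0 m := by
  induction x, hx using CliffordAlgebra.even_induction with
  | algebraMap r => exact (Algebra.commutes r _).symm
  | add x y hx hy ihx ihy => rw [mul_add, add_mul, ihx, ihy]
  | ι_mul_ι_mul m₁ m₂ x hx ih =>
    rw [mul_assoc (ι Q0 m₁), grass_ι_swap m m₁, grass_ι_swap m m₂, ih]
    simp [mul_neg, neg_neg, mul_assoc]

lemma grass_ι_comm1 (x : GrassmannAlg F) (hx : x ∈ grassmannPart F 1) (m : ℕ →₀ F) :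
    ι Q0 m * x = -(x * ι Q0 m) := by
  induction x, hx using CliffordAlgebra.odd_induction with
  | ι v => exact grass_ι_anti m v
  | add x y hx hy ihx ihy => rw [mul_add, add_mul, ihx, ihy, neg_add]
  | ι_mul_ι_mul m₁ m₂ x hx ih =>
    rw [mul_assoc (ι Q0 m₁), grass_ι_swap m m₁, grass_ι_swap m m₂, ih]
    simp [mul_neg, neg_neg, mul_assoc]

lemma grass_ιι_comm (m₁ m₂ : ℕ →₀ F) (y : GrassmannAlg F)
    (hy : y ∈ grassmannPart F 0 ∨ y ∈ grassmannPart F 1) :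
    ι Q0 m₁ * (ι Q0 m₂ * y) = y * (ι Q0 m₁ * ι Q0 m₂) := by
  rcases hy with hy | hy
  · rw [grass_ι_comm0 y hy m₂, ← mul_assoc, grass_ι_comm0 y hy m₁, mul_assoc]
  · rw [grass_ι_comm1 y hy m₂, mul_neg, ← mul_assoc, grass_ι_comm1 y hy m₁]
    simp [neg_mul, neg_neg, mul_assoc]

lemma grass_comm0 (x : GrassmannAlg F) (hx : x ∈ grassmannPart F 0) (y : GrassmannAlg F)
    (hy : y ∈ grassmannPart F 0 ∨ y ∈ grassmannPart F 1) :
    x * y = y * x := by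
  induction x, hx using CliffordAlgebra.even_induction with
  | algebraMap r => exact Algebra.commutes r y
  | add x x' hx hx' ihx ihx' => rw [add_mul, mul_add, ihx, ihx']
  | ι_mul_ι_mul m₁ m₂ x hx ih =>
    have hc : (ι Q0 m₁ * ι Q0 m₂) * y = y * (ι Q0 m₁ * ι Q0 m₂) := by
      rw [mul_assoc]; exact grass_ιι_comm m₁ m₂ y hy
    rw [mul_assoc, ih, ← mul_assoc, hc, mul_assoc]

lemma grass_comm11 (x : GrassmannAlg F) (hx : x ∈ grassmannPart F 1) (y : GrassmannAlg F)
    (hy : y ∈ grassmannPart F 1) :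
    x * y = -(y * x) := by
  induction x, hx using CliffordAlgebra.odd_induction with
  | ι v => exact grass_ι_comm1 y hy v
  | add x x' hx hx' ihx ihx' => rw [add_mul, mul_add, ihx, ihx', neg_add]
  | ι_mul_ι_mul m₁ m₂ x hx ih =>
    have hc : (ι Q0 m₁ * ι Q0 m₂) * y = y * (ι Q0 m₁ * ι Q0 m₂) := by
      rw [mul_assoc]; exact grass_ιι_comm m₁ m₂ y (Or.inr hy)
    rw [mul_assoc, ih, mul_neg, ← mul_assoc, hc, mul_assoc]

end Grass

/-- The multiplication of the tensor product algebra `G ⊗ 𝒜`: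
`(g ⊗ a) · (h ⊗ b) = (gh) ⊗ (ab)`. -/
noncomputable def envMul (F : Type*) [Field F] (A : Type*) [NonUnitalNonAssocRing A]
    [Module F A] [SMulCommClass F A A] [IsScalarTower F A A] :
    (GrassmannAlg F ⊗[F] A) →ₗ[F] (GrassmannAlg F ⊗[F] A) →ₗ[F] (GrassmannAlg F ⊗[F] A) :=
  TensorProduct.map₂ (LinearMap.mul F (GrassmannAlg F)) (LinearMap.mul F A)

/-- The Grassmann envelope `G(𝒜) = G₀⊗𝒜₀ + G₁⊗𝒜₁` of a superalgebra
`𝒜 = 𝒜₀ ⊕ 𝒜₁`, as a submodule of `G ⊗ 𝒜`. -/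
noncomputable def grassmannEnvelope (F : Type*) [Field F] (A : Type*)
    [NonUnitalNonAssocRing A] [Module F A] [SMulCommClass F A A] [IsScalarTower F A A]
    (A0 A1 : Submodule F A) : Submodule F (GrassmannAlg F ⊗[F] A) :=
  Submodule.span F {u | (∃ g ∈ grassmannPart F 0, ∃ b ∈ A0, g ⊗ₜ[F] b = u) ∨
    (∃ g ∈ grassmannPart F 1, ∃ b ∈ A1, g ⊗ₜ[F] b = u)}

lemma envMul_tmul {F : Type*} [Field F] {A : Type*} [NonUnitalNonAssocRing A]
    [Module F A] [SMulCommClass F A A] [IsScalarTower F A A]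
    (g h : GrassmannAlg F) (a b : A) :
    envMul F A (g ⊗ₜ[F] a) (h ⊗ₜ[F] b) = (g * h) ⊗ₜ[F] (a * b) := rfl

set_option maxHeartbeats 1000000 in
set_option synthInstance.maxHeartbeats 400000 in
/-- Every metabelian superalgebra generated by odd elements and
satisfying relations (13)–(16) of the paper has a right alternative Grassmann
envelope: `(x, y, y) = 0` holds in `G(𝒜)`. -/
theorem stmt7 {F : Type*} [Field F] (hch2 : (2 : F) ≠ 0) (hch3 : (3 : F) ≠ 0)
    {A : Type*} [NonUnitalNonAssocRing A] [Module F A]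
    [SMulCommClass F A A] [IsScalarTower F A A]
    (A0 A1 : Submodule F A)
    (hg00 : ∀ x ∈ A0, ∀ y ∈ A0, x * y ∈ A0)
    (hg01 : ∀ x ∈ A0, ∀ y ∈ A1, x * y ∈ A1)
    (hg10 : ∀ x ∈ A1, ∀ y ∈ A0, x * y ∈ A1)
    (hg11 : ∀ x ∈ A1, ∀ y ∈ A1, x * y ∈ A0)
    (hsup : A0 ⊔ A1 = ⊤) (hinf : A0 ⊓ A1 = ⊥)
    (S : Set A) (hSodd : S ⊆ A1)
    (hgen : NonUnitalAlgebra.adjoin F S = ⊤)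
    (hmetab : ∀ p q r s : A, (p * q) * (r * s) = 0)
    (h1 : ∀ x ∈ A0, ∀ c : A, x * c = 0)
    (h2 : ∀ x ∈ A1, ∀ y ∈ A1, x * y = y * x)
    (h3 : ∀ ui ∈ S, ∀ uj ∈ S, ∀ b ∈ A0, ui * (uj * b) = uj * (ui * b))
    (h4 : ∀ ui ∈ S, ∀ uj ∈ S, ∀ uk ∈ S,
      ∀ c ∈ Submodule.span F {u : A | ∃ p ∈ A1, ∃ q ∈ A0, p * q = u},
      uk * (ui * (uj * c) - uj * (ui * c)) = 0) :
    ∀ x ∈ grassmannEnvelope F A A0 A1, ∀ y ∈ grassmannEnvelope F A A0 A1,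
      envMul F A (envMul F A x y) y = envMul F A x (envMul F A y y) := by
  classical
  have L1 : ∀ (p q : A), ∀ b ∈ Submodule.span F {x : A | ∃ p q : A, p * q = x},
      (p * q) * b = 0 := by
    intro p q b hb
    induction hb using Submodule.span_induction with
    | mem x hx => obtain ⟨r, s, rfl⟩ := hx; exact hmetab p q r s
    | zero => simp
    | add x y _ _ ihx ihy => rw [mul_add, ihx, ihy, add_zero]
    | smul r x _ ih => rw [mul_smul_comm, ih, smul_zero]
  have hUA1 : Submodule.span F (S ∪ {x : A | ∃ p ∈ A1, ∃ q ∈ A0, p * q = x}) ≤ A1 :=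
    Submodule.span_le.mpr (by
      rintro x (hx | ⟨p, hp, q, hq, rfl⟩)
      exacts [hSodd hx, hg10 p hp q hq])
  have hVA0 : Submodule.span F {x : A | ∃ p ∈ A1, ∃ q ∈ A1, p * q = x} ≤ A0 :=
    Submodule.span_le.mpr (by
      rintro x ⟨p, hp, q, hq, rfl⟩
      exact hg11 p hp q hq)
  have hVP : Submodule.span F {x : A | ∃ p ∈ A1, ∃ q ∈ A1, p * q = x} ≤
      Submodule.span F {x : A | ∃ p q : A, p * q = x} :=
    Submodule.span_le.mpr (by
      rintro x ⟨p, hp, q, hq, rfl⟩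
      exact Submodule.subset_span ⟨p, q, rfl⟩)
  have hmulW : ∀ y ∈ Submodule.span F ((S ∪ {x : A | ∃ p ∈ A1, ∃ q ∈ A0, p * q = x}) ∪
        {x : A | ∃ p ∈ A1, ∃ q ∈ A1, p * q = x}),
      ∀ x ∈ ((S ∪ {x : A | ∃ p ∈ A1, ∃ q ∈ A0, p * q = x}) ∪
        {x : A | ∃ p ∈ A1, ∃ q ∈ A1, p * q = x}),
      x * y ∈ Submodule.span F ((S ∪ {x : A | ∃ p ∈ A1, ∃ q ∈ A0, p * q = x}) ∪
        {x : A | ∃ p ∈ A1, ∃ q ∈ A1, p * q = x}) := by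
    intro y hy
    induction hy using Submodule.span_induction with
    | mem y hy =>
      intro x hx
      rcases hx with (hxS | ⟨p, hp, q, hq, rfl⟩) | ⟨p, hp, q, hq, rfl⟩
      · rcases hy with (hyS | ⟨p, hp, q, hq, rfl⟩) | ⟨p, hp, q, hq, rfl⟩
        · exact Submodule.subset_span (Or.inr ⟨x, hSodd hxS, y, hSodd hyS, rfl⟩)
        · exact Submodule.subset_span (Or.inr ⟨x, hSodd hxS, _, hg10 p hp q hq, rfl⟩)
        · exact Submodule.subset_span (Or.inl (Or.inr ⟨x, hSodd hxS, _, hg11 p hp q hq, rfl⟩))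
      · rcases hy with (hyS | ⟨r, hr, s, hs, rfl⟩) | ⟨r, hr, s, hs, rfl⟩
        · exact Submodule.subset_span (Or.inr ⟨_, hg10 p hp q hq, y, hSodd hyS, rfl⟩)
        · rw [hmetab p q r s]; exact Submodule.zero_mem _
        · rw [hmetab p q r s]; exact Submodule.zero_mem _
      · rw [h1 _ (hg11 p hp q hq) y]; exact Submodule.zero_mem _
    | zero => intro x hx; rw [mul_zero]; exact Submodule.zero_mem _
    | add y z _ _ ihy ihz =>
      intro x hx; rw [mul_add]; exact Submodule.add_mem _ (ihy x hx) (ihz x hx)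
    | smul r y _ ih =>
      intro x hx; rw [mul_smul_comm]; exact Submodule.smul_mem _ _ (ih x hx)
  have hWmul : ∀ x ∈ Submodule.span F ((S ∪ {x : A | ∃ p ∈ A1, ∃ q ∈ A0, p * q = x}) ∪
        {x : A | ∃ p ∈ A1, ∃ q ∈ A1, p * q = x}),
      ∀ y ∈ Submodule.span F ((S ∪ {x : A | ∃ p ∈ A1, ∃ q ∈ A0, p * q = x}) ∪
        {x : A | ∃ p ∈ A1, ∃ q ∈ A1, p * q = x}),
      x * y ∈ Submodule.span F ((S ∪ {x : A | ∃ p ∈ A1, ∃ q ∈ A0, p * q = x}) ∪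
        {x : A | ∃ p ∈ A1, ∃ q ∈ A1, p * q = x}) := by
    intro x hx
    induction hx using Submodule.span_induction with
    | mem x hx => intro y hy; exact hmulW y hy x hx
    | zero => intro y hy; rw [zero_mul]; exact Submodule.zero_mem _
    | add x z _ _ ihx ihz =>
      intro y hy; rw [add_mul]; exact Submodule.add_mem _ (ihx y hy) (ihz y hy)
    | smul r x _ ih =>
      intro y hy; rw [smul_mul_assoc]; exact Submodule.smul_mem _ _ (ih y hy)
  have hall : ∀ a : A,
      a ∈ Submodule.span F (S ∪ {x : A | ∃ p ∈ A1, ∃ q ∈ A0, p * q = x}) ⊔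
        Submodule.span F {x : A | ∃ p ∈ A1, ∃ q ∈ A1, p * q = x} := by
    intro a
    have ha : a ∈ NonUnitalAlgebra.adjoin F S := by rw [hgen]; trivial
    rw [← Submodule.span_union]
    induction ha using NonUnitalAlgebra.adjoin_induction with
    | mem x hx => exact Submodule.subset_span (Or.inl (Or.inl hx))
    | add x y _ _ ihx ihy => exact Submodule.add_mem _ ihx ihy
    | zero => exact Submodule.zero_mem _
    | mul x y _ _ ihx ihy => exact hWmul x ihx y ihy
    | smul r x _ ih => exact Submodule.smul_mem _ _ ih
  have hA1U : A1 ≤ Submodule.span F (S ∪ {x : A | ∃ p ∈ A1, ∃ q ∈ A0, p * q = x}) := by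
    intro a ha
    obtain ⟨u, hu, v, hv, rfl⟩ := Submodule.mem_sup.mp (hall a)
    have hv0 : v ∈ A0 ⊓ A1 :=
      ⟨hVA0 hv, by simpa using Submodule.sub_mem _ ha (hUA1 hu)⟩
    rw [hinf, Submodule.mem_bot] at hv0
    rw [hv0, add_zero]
    exact hu
  have hA0V : A0 ≤ Submodule.span F {x : A | ∃ p ∈ A1, ∃ q ∈ A1, p * q = x} := by
    intro a ha
    obtain ⟨u, hu, v, hv, rfl⟩ := Submodule.mem_sup.mp (hall a)
    have hu0 : u ∈ A0 ⊓ A1 :=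
      ⟨by simpa using Submodule.sub_mem _ ha (hVA0 hv), hUA1 hu⟩
    rw [hinf, Submodule.mem_bot] at hu0
    rw [hu0, zero_add]
    exact hv
  have hA0P : A0 ≤ Submodule.span F {x : A | ∃ p q : A, p * q = x} := le_trans hA0V hVP
  have K : ∀ a ∈ A1, ∀ b ∈ A0, ∀ c ∈ A1, (a * b) * c = a * (c * b) := by
    intro a ha b hb c hc
    have ha' : a ∈ Submodule.span F (S ∪ {x : A | ∃ p ∈ A1, ∃ q ∈ A0, p * q = x}) := hA1U ha
    clear ha
    induction ha' using Submodule.span_induction with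
    | mem a ha0 =>
      rcases ha0 with haS | ⟨p, hp, q, hq, rfl⟩
      · have hc' : c ∈ Submodule.span F (S ∪ {x : A | ∃ p ∈ A1, ∃ q ∈ A0, p * q = x}) :=
          hA1U hc
        clear hc
        induction hc' using Submodule.span_induction with
        | mem c hc0 =>
          rcases hc0 with hcS | ⟨p, hp, q, hq, rfl⟩
          · rw [h2 _ (hg10 a (hSodd haS) b hb) c (hSodd hcS)]
            exact h3 c hcS a haS b hb
          · rw [hmetab a b p q, L1 p q b (hA0P hb), mul_zero]
        | zero => simp
        | add c1 c2 _ _ ih1 ih2 => rw [mul_add, add_mul, mul_add, ih1, ih2]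
        | smul r c _ ih => rw [mul_smul_comm, smul_mul_assoc, mul_smul_comm, ih]
      · rw [L1 p q b (hA0P hb), zero_mul, hmetab p q c b]
    | zero => simp
    | add a1 a2 _ _ ih1 ih2 => rw [add_mul, add_mul, add_mul, ih1, ih2]
    | smul r a _ ih => rw [smul_mul_assoc, smul_mul_assoc, smul_mul_assoc, ih]
  have key : ∀ x ∈ grassmannEnvelope F A A0 A1, ∀ y ∈ grassmannEnvelope F A A0 A1,
      ∀ z ∈ grassmannEnvelope F A A0 A1,
      envMul F A (envMul F A x y) z + envMul F A (envMul F A x z) y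
        = envMul F A x (envMul F A y z) + envMul F A x (envMul F A z y) := by
    intro x hx
    unfold grassmannEnvelope at hx
    induction hx using Submodule.span_induction with
    | mem x hxm =>
      intro y hy
      unfold grassmannEnvelope at hy
      induction hy using Submodule.span_induction with
      | mem y hym =>
        intro z hz
        unfold grassmannEnvelope at hz
        induction hz using Submodule.span_induction with
        | mem z hzm =>
          obtain ⟨g, hg, a, ha, rfl⟩ | ⟨g, hg, a, ha, rfl⟩ := hxm
          · -- a ∈ A0 : everything vanishes
            obtain ⟨h, hh, b, hb, rfl⟩ | ⟨h, hh, b, hb, rfl⟩ := hym <;>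
              obtain ⟨k, hk, c, hc, rfl⟩ | ⟨k, hk, c, hc, rfl⟩ := hzm <;>
              simp [envMul_tmul, h1 a ha, tmul_zero]
          · obtain ⟨h, hh, b, hb, rfl⟩ | ⟨h, hh, b, hb, rfl⟩ := hym
            · obtain ⟨k, hk, c, hc, rfl⟩ | ⟨k, hk, c, hc, rfl⟩ := hzm
              · -- a ∈ A1, b ∈ A0, c ∈ A0
                simp [envMul_tmul, L1 a b c (hA0P hc), L1 a c b (hA0P hb),
                  h1 b hb, h1 c hc, tmul_zero]
              · -- a ∈ A1, b ∈ A0, c ∈ A1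
                have e1 : (a * b) * c = a * (c * b) := K a ha b hb c hc
                have e2 : (a * c) * b = 0 := h1 _ (hg11 a ha c hc) b
                have e3 : b * c = 0 := h1 b hb c
                have hg' : g * (k * h) = g * h * k := by
                  rw [← grass_comm0 h hh k (Or.inr hk), ← mul_assoc]
                simp only [envMul_tmul, e1, e2, e3, mul_zero, tmul_zero, map_zero,
                  zero_add, add_zero, hg', mul_assoc]
            · obtain ⟨k, hk, c, hc, rfl⟩ | ⟨k, hk, c, hc, rfl⟩ := hzm
              · -- a ∈ A1, b ∈ A1, c ∈ A0
                have e1 : (a * b) * c = 0 := h1 _ (hg11 a ha b hb) c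
                have e2 : (a * c) * b = a * (b * c) := K a ha c hc b hb
                have e3 : c * b = 0 := h1 c hc b
                have hg' : g * k * h = g * (h * k) := by
                  rw [mul_assoc, grass_comm0 k hk h (Or.inr hh)]
                simp only [envMul_tmul, e1, e2, e3, mul_zero, tmul_zero, map_zero,
                  zero_add, add_zero, hg']
              · -- a ∈ A1, b ∈ A1, c ∈ A1
                have e1 : (a * b) * c = 0 := h1 _ (hg11 a ha b hb) c
                have e2 : (a * c) * b = 0 := h1 _ (hg11 a ha c hc) b
                have e3 : b * c = c * b := h2 b hb c hc
                have hg' : k * h = -(h * k) := grass_comm11 k hk h hh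
                simp [envMul_tmul, e1, e2, e3, hg', mul_neg, neg_tmul, tmul_zero]
        | zero => simp only [map_zero, LinearMap.zero_apply, add_zero, zero_add]
        | add z1 z2 _ _ ih1 ih2 =>
          simp only [map_add, LinearMap.add_apply]
          rw [add_add_add_comm, ih1, ih2, add_add_add_comm]
        | smul r z _ ih =>
          simp only [map_smul, LinearMap.smul_apply, ← smul_add]
          rw [ih]
      | zero =>
        intro z hz
        simp only [map_zero, LinearMap.zero_apply, add_zero, zero_add]
      | add y1 y2 _ _ ih1 ih2 =>
        intro z hz
        simp only [map_add, LinearMap.add_apply]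
        rw [add_add_add_comm, ih1 z hz, ih2 z hz, add_add_add_comm]
      | smul r y _ ih =>
        intro z hz
        simp only [map_smul, LinearMap.smul_apply, ← smul_add]
        rw [ih z hz]
    | zero =>
      intro y hy z hz
      simp only [map_zero, LinearMap.zero_apply, add_zero, zero_add]
    | add x1 x2 _ _ ih1 ih2 =>
      intro y hy z hz
      simp only [map_add, LinearMap.add_apply]
      rw [add_add_add_comm, ih1 y hy z hz, ih2 y hy z hz, add_add_add_comm]
    | smul r x _ ih =>
      intro y hy z hz
      simp only [map_smul, LinearMap.smul_apply, ← smul_add]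
      rw [ih y hy z hz]
  intro x hx y hy
  have hk := key x hx y hy y hy
  have h2' : (2 : F) • (envMul F A (envMul F A x y) y)
      = (2 : F) • (envMul F A x (envMul F A y y)) := by
    rw [two_smul, two_smul]; exact hk
  exact smul_right_injective _ hch2 h2'
end

section
/- Let 𝒜 be a metabelian superalgebra generated by odd elements satisfying 𝒜₀𝒜 = 0 and [𝒜₁,𝒜₁] = 0 and u_i(u_j b) = u_j(u_i b) for generators u_i,u_j and b ∈ 𝒜₀. Then in the Grassmann envelope G(𝒜), the operator L_a R_b is skew-symmetric in a, b; consequently G(𝒜) satisfies the Jordan nilpotency identity (x∘y)∘z = 0. -/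
open TensorProduct

set_option synthInstance.maxHeartbeats 400000

set_option maxHeartbeats 2000000

section Grass
variable {F : Type*} [Field F]

local notation "QQ" => (0 : QuadraticForm F (ℕ →₀ F))

open CliffordAlgebra

lemma iota_anticomm (m n : ℕ →₀ F) : ι QQ m * ι QQ n = -(ι QQ n * ι QQ m) := by
  have h := CliffordAlgebra.ι_mul_ι_add_swap (Q := QQ) m n
  have hp : QuadraticMap.polar (QQ : QuadraticForm F (ℕ →₀ F)) m n = 0 := by
    simp [QuadraticMap.polar]
  rw [hp, map_zero] at h
  exact eq_neg_of_add_eq_zero_left h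

lemma iota_pair_central (m n : ℕ →₀ F) (x : GrassmannAlg F) :
    (ι QQ m * ι QQ n) * x = x * (ι QQ m * ι QQ n) := by
  induction x using CliffordAlgebra.induction with
  | algebraMap r => exact (Algebra.commutes r _).symm
  | ι v =>
    rw [mul_assoc, iota_anticomm n v, mul_neg, ← mul_assoc, iota_anticomm m v,
      neg_mul, neg_neg, mul_assoc]
  | mul a b ha hb =>
    rw [← mul_assoc, ha, mul_assoc, hb, mul_assoc]
  | add a b ha hb => rw [mul_add, add_mul, ha, hb]

lemma grass_even_comm {g : GrassmannAlg F} (hg : g ∈ grassmannPart F 0)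
    (x : GrassmannAlg F) : g * x = x * g := by
  rw [grassmannPart] at hg
  induction g, hg using CliffordAlgebra.even_induction with
  | algebraMap r => exact Algebra.commutes r x
  | add a b _ _ ha hb => rw [add_mul, mul_add, ha, hb]
  | ι_mul_ι_mul m n y _ hy =>
    rw [mul_assoc, hy, ← mul_assoc, iota_pair_central, mul_assoc]

lemma grass_odd_iota (v : ℕ →₀ F) {k : GrassmannAlg F} (hk : k ∈ grassmannPart F 1) :
    ι QQ v * k = -(k * ι QQ v) := by
  rw [grassmannPart] at hk
  induction k, hk using CliffordAlgebra.odd_induction with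
  | ι w => exact iota_anticomm v w
  | add a b _ _ ha hb => rw [mul_add, ha, hb, add_mul, neg_add]
  | ι_mul_ι_mul m n y _ hy =>
    rw [← mul_assoc, ← iota_pair_central, mul_assoc, hy, mul_neg, ← mul_assoc]

lemma grass_odd_anticomm {g k : GrassmannAlg F} (hg : g ∈ grassmannPart F 1)
    (hk : k ∈ grassmannPart F 1) : g * k = -(k * g) := by
  rw [grassmannPart] at hg
  induction g, hg using CliffordAlgebra.odd_induction with
  | ι v => exact grass_odd_iota v hk
  | add a b _ _ ha hb => rw [add_mul, ha, hb, mul_add, neg_add]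
  | ι_mul_ι_mul m n y _ hy =>
    rw [mul_assoc, hy, mul_neg, ← mul_assoc, iota_pair_central, mul_assoc]

/-- odd * even is odd -/
lemma grass_oe_mem {a e : GrassmannAlg F} (ha : a ∈ grassmannPart F 1)
    (he : e ∈ grassmannPart F 0) : a * e ∈ grassmannPart F 1 := by
  rw [grassmannPart] at ha he ⊢
  have := SetLike.mul_mem_graded ha he
  norm_num at this
  exact this

/-- `b * (a * e) = -((a * e) * b)` for `a, b` odd and `e` even. -/
lemma grass_sign_oe {a e b : GrassmannAlg F} (ha : a ∈ grassmannPart F 1)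
    (he : e ∈ grassmannPart F 0) (hb : b ∈ grassmannPart F 1) :
    b * (a * e) = -((a * e) * b) := by
  rw [grass_odd_anticomm (grass_oe_mem ha he) hb, neg_neg]

/-- `k * h * g = -(g * h * k)` for `g, k` odd and `h` even. -/
lemma grass_sign_skew {g h k : GrassmannAlg F} (hg : g ∈ grassmannPart F 1)
    (hh : h ∈ grassmannPart F 0) (hk : k ∈ grassmannPart F 1) :
    k * h * g = -(g * h * k) := by
  rw [mul_assoc, grass_even_comm hh g]
  exact grass_sign_oe hg hh hk

end Grass

/-- For a metabelian superalgebra generated by odd elements with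
`𝒜₀𝒜 = 0`, `[𝒜₁,𝒜₁] = 0` and `uᵢ(uⱼb) = uⱼ(uᵢb)`, the operator `L_a R_b` is
skew-symmetric in `a, b` on the Grassmann envelope `G(𝒜)`; consequently `G(𝒜)`
satisfies `(x∘y)∘z = 0`. -/
theorem stmt8 {F : Type*} [Field F] (hch2 : (2 : F) ≠ 0)
    {A : Type*} [NonUnitalNonAssocRing A] [Module F A]
    [SMulCommClass F A A] [IsScalarTower F A A]
    (A0 A1 : Submodule F A)
    (hg00 : ∀ x ∈ A0, ∀ y ∈ A0, x * y ∈ A0)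
    (hg01 : ∀ x ∈ A0, ∀ y ∈ A1, x * y ∈ A1)
    (hg10 : ∀ x ∈ A1, ∀ y ∈ A0, x * y ∈ A1)
    (hg11 : ∀ x ∈ A1, ∀ y ∈ A1, x * y ∈ A0)
    (hsup : A0 ⊔ A1 = ⊤) (hinf : A0 ⊓ A1 = ⊥)
    (S : Set A) (hSodd : S ⊆ A1)
    (hgen : NonUnitalAlgebra.adjoin F S = ⊤)
    (hmetab : ∀ p q r s : A, (p * q) * (r * s) = 0)
    (h1 : ∀ x ∈ A0, ∀ c : A, x * c = 0)
    (h2 : ∀ x ∈ A1, ∀ y ∈ A1, x * y = y * x)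
    (h3 : ∀ ui ∈ S, ∀ uj ∈ S, ∀ b ∈ A0, ui * (uj * b) = uj * (ui * b)) :
    (∀ a ∈ grassmannEnvelope F A A0 A1, ∀ b ∈ grassmannEnvelope F A A0 A1,
      ∀ x ∈ grassmannEnvelope F A A0 A1,
        envMul F A (envMul F A a x) b = -envMul F A (envMul F A b x) a) ∧
    (∀ x ∈ grassmannEnvelope F A A0 A1, ∀ y ∈ grassmannEnvelope F A A0 A1,
      ∀ z ∈ grassmannEnvelope F A A0 A1,
        envMul F A (envMul F A x y + envMul F A y x) z
          + envMul F A z (envMul F A x y + envMul F A y x) = 0) := by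
  classical
  -- the submodule spanned by all products
  set P : Submodule F A := Submodule.span F {a : A | ∃ x y : A, x * y = a} with hPdef
  have hprodP : ∀ x y : A, x * y ∈ P := fun x y => Submodule.subset_span ⟨x, y, rfl⟩
  have hPmul : ∀ n ∈ P, ∀ x y : A, (x * y) * n = 0 := by
    intro n hn
    induction hn using Submodule.span_induction with
    | mem c hc => obtain ⟨z, t, rfl⟩ := hc; intro x y; exact hmetab x y z t
    | zero => intro x y; rw [mul_zero]
    | add a b _ _ ha hb => intro x y; rw [mul_add, ha, hb, add_zero]
    | smul r a _ ha => intro x y; rw [mul_smul_comm, ha, smul_zero]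
  have hPP : ∀ m ∈ P, ∀ n ∈ P, m * n = 0 := by
    intro m hm
    induction hm using Submodule.span_induction with
    | mem c hc => obtain ⟨z, t, rfl⟩ := hc; intro n hn; exact hPmul n hn z t
    | zero => intro n hn; rw [zero_mul]
    | add a b _ _ ha hb => intro n hn; rw [add_mul, ha n hn, hb n hn, add_zero]
    | smul r a _ ha => intro n hn; rw [smul_mul_assoc, ha n hn, smul_zero]
  -- every element is a span-of-S element plus an element of P
  have hdecomp : ∀ a : A, ∃ v ∈ Submodule.span F S, a - v ∈ P := by
    intro a
    have ha : a ∈ NonUnitalAlgebra.adjoin F S := by rw [hgen]; trivial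
    induction ha using NonUnitalAlgebra.adjoin_induction with
    | mem x hx => exact ⟨x, Submodule.subset_span hx, by simpa using P.zero_mem⟩
    | add x y hx hy ihx ihy =>
      obtain ⟨v, hv, hm⟩ := ihx
      obtain ⟨w, hw, hn⟩ := ihy
      refine ⟨v + w, add_mem hv hw, ?_⟩
      have : x + y - (v + w) = (x - v) + (y - w) := by abel
      rw [this]; exact add_mem hm hn
    | zero => exact ⟨0, zero_mem _, by simpa using P.zero_mem⟩
    | mul x y hx hy ihx ihy => exact ⟨0, zero_mem _, by simpa using hprodP x y⟩
    | smul r x hx ihx =>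
      obtain ⟨v, hv, hm⟩ := ihx
      exact ⟨r • v, Submodule.smul_mem _ r hv, by
        rw [← smul_sub]; exact Submodule.smul_mem _ r hm⟩
  have hmemsup : ∀ a : A, ∃ a0 ∈ A0, ∃ a1 ∈ A1, a0 + a1 = a := by
    intro a
    have : a ∈ A0 ⊔ A1 := by rw [hsup]; trivial
    exact Submodule.mem_sup.mp this
  -- P is graded
  have hPgrade : ∀ m ∈ P, ∃ m0 ∈ A0 ⊓ P, ∃ m1 ∈ A1, m = m0 + m1 := by
    intro m hm
    induction hm using Submodule.span_induction with
    | mem c hc =>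
      obtain ⟨x, y, rfl⟩ := hc
      obtain ⟨x0, hx0, x1, hx1, rfl⟩ := hmemsup x
      obtain ⟨y0, hy0, y1, hy1, rfl⟩ := hmemsup y
      refine ⟨x1 * y1, ⟨hg11 x1 hx1 y1 hy1, hprodP x1 y1⟩, x1 * y0, hg10 x1 hx1 y0 hy0, ?_⟩
      rw [add_mul, h1 x0 hx0, zero_add, mul_add, add_comm]
    | zero => exact ⟨0, ⟨zero_mem _, zero_mem _⟩, 0, zero_mem _, by rw [add_zero]⟩
    | add a b _ _ iha ihb =>
      obtain ⟨a0, ha0, a1, ha1, rfl⟩ := iha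
      obtain ⟨b0, hb0, b1, hb1, rfl⟩ := ihb
      exact ⟨a0 + b0, add_mem ha0 hb0, a1 + b1, add_mem ha1 hb1, by abel⟩
    | smul r a _ iha =>
      obtain ⟨a0, ha0, a1, ha1, rfl⟩ := iha
      exact ⟨r • a0, Submodule.smul_mem _ r ha0, r • a1, Submodule.smul_mem _ r ha1,
        by rw [smul_add]⟩
  -- A0 consists of products
  have hA0P : ∀ q ∈ A0, q ∈ P := by
    intro q hq
    obtain ⟨v, hv, hm⟩ := hdecomp q
    obtain ⟨m0, hm0, m1, hm1, hsum⟩ := hPgrade _ hm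
    have hvA1 : v ∈ A1 := Submodule.span_le.mpr hSodd hv
    have hq2 : q = m0 + m1 + v := by rw [← hsum]; abel
    have heq : v + m1 = q - m0 := by rw [hq2]; abel
    have hz : v + m1 = 0 := by
      have hmem : v + m1 ∈ A0 ⊓ A1 := ⟨heq ▸ sub_mem hq hm0.1, add_mem hvA1 hm1⟩
      rw [hinf] at hmem
      exact (Submodule.mem_bot F).mp hmem
    have hqm : q = m0 + (v + m1) := by rw [hq2]; abel
    rw [hqm, hz, add_zero]
    exact hm0.2
  -- h3 extended to spans
  have h3span : ∀ v ∈ Submodule.span F S, ∀ w ∈ Submodule.span F S, ∀ b ∈ A0,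
      v * (w * b) = w * (v * b) := by
    intro v hv
    induction hv using Submodule.span_induction with
    | mem x hx =>
      intro w hw
      induction hw using Submodule.span_induction with
      | mem y hy => exact h3 x hx y hy
      | zero => intro b hb; simp
      | add a c _ _ iha ihc =>
        intro b hb
        rw [add_mul, add_mul, mul_add, iha b hb, ihc b hb]
      | smul r a _ iha =>
        intro b hb
        rw [smul_mul_assoc, smul_mul_assoc, mul_smul_comm, iha b hb]
    | zero => intro w hw b hb; simp
    | add a c _ _ iha ihc =>
      intro w hw b hb
      rw [add_mul, add_mul, mul_add, iha w hw b hb, ihc w hw b hb]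
    | smul r a _ iha =>
      intro w hw b hb
      rw [smul_mul_assoc, smul_mul_assoc, mul_smul_comm, iha w hw b hb]
  -- the key identity r(pq) = p(rq)
  have hkey : ∀ p ∈ A1, ∀ r ∈ A1, ∀ q ∈ A0, r * (p * q) = p * (r * q) := by
    intro p hp r hr q hq
    obtain ⟨vp, hvp, hmp⟩ := hdecomp p
    obtain ⟨vr, hvr, hmr⟩ := hdecomp r
    have hqP := hA0P q hq
    have hpe : p = (p - vp) + vp := by abel
    have hre : r = (r - vr) + vr := by abel
    have e1 : p * q = vp * q := by
      conv_lhs => rw [hpe]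
      rw [add_mul, hPP _ hmp _ hqP, zero_add]
    have e2 : r * q = vr * q := by
      conv_lhs => rw [hre]
      rw [add_mul, hPP _ hmr _ hqP, zero_add]
    have e3 : r * (vp * q) = vr * (vp * q) := by
      conv_lhs => rw [hre]
      rw [add_mul, hPP _ hmr _ (hprodP vp q), zero_add]
    have e4 : p * (vr * q) = vp * (vr * q) := by
      conv_lhs => rw [hpe]
      rw [add_mul, hPP _ hmp _ (hprodP vr q), zero_add]
    rw [e1, e2, e3, e4]
    exact h3span vr hvr vp hvp q hq
  -- skew-symmetry in A
  have hskewA : ∀ p ∈ A1, ∀ q ∈ A0, ∀ r ∈ A1, (p * q) * r = (r * q) * p := by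
    intro p hp q hq r hr
    calc (p * q) * r = r * (p * q) := h2 (p * q) (hg10 p hp q hq) r hr
      _ = p * (r * q) := hkey p hp r hr q hq
      _ = (r * q) * p := h2 p hp (r * q) (hg10 r hr q hq)
  -- degenerate-case lemmas
  have hrqp0 : ∀ r q p : A, (q ∈ A0 ∨ q ∈ A1) → (r ∈ A0 ∨ r ∈ A1) → p ∈ A0 →
      (r * q) * p = 0 := by
    intro r q p hq hr hp
    rcases hr with hr | hr
    · rw [h1 r hr q, zero_mul]
    · rcases hq with hq | hq
      · exact hPmul p (hA0P p hp) r q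
      · exact h1 (r * q) (hg11 r hr q hq) p
  have hql : ∀ p q r : A, q ∈ A1 → (p ∈ A0 ∨ p ∈ A1) → (p * q) * r = 0 := by
    intro p q r hq hp
    rcases hp with hp | hp
    · rw [h1 p hp q, zero_mul]
    · exact h1 (p * q) (hg11 p hp q hq) r
  -- product formula on pure tensors
  have hμt : ∀ (g h : GrassmannAlg F) (p q : A),
      envMul F A (g ⊗ₜ[F] p) (h ⊗ₜ[F] q) = (g * h) ⊗ₜ[F] (p * q) := by
    intro g h p q
    simp [envMul, TensorProduct.map₂_apply_tmul, TensorProduct.map_tmul]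
  -- the generating set of the envelope
  have hform : ∀ {u : GrassmannAlg F ⊗[F] A},
      u ∈ {u : GrassmannAlg F ⊗[F] A |
        (∃ g ∈ grassmannPart F 0, ∃ b ∈ A0, g ⊗ₜ[F] b = u) ∨
        (∃ g ∈ grassmannPart F 1, ∃ b ∈ A1, g ⊗ₜ[F] b = u)} →
      ∃ g c, ((g ∈ grassmannPart F 0 ∧ c ∈ A0) ∨ (g ∈ grassmannPart F 1 ∧ c ∈ A1)) ∧
        g ⊗ₜ[F] c = u := by
    rintro u (⟨g, hg, c, hc, rfl⟩ | ⟨g, hg, c, hc, rfl⟩)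
    exacts [⟨g, c, Or.inl ⟨hg, hc⟩, rfl⟩, ⟨g, c, Or.inr ⟨hg, hc⟩, rfl⟩]
  -- core computation for skew-symmetry, on pure homogeneous tensors
  have hskewcore : ∀ (g h k : GrassmannAlg F) (p q r : A),
      ((g ∈ grassmannPart F 0 ∧ p ∈ A0) ∨ (g ∈ grassmannPart F 1 ∧ p ∈ A1)) →
      ((h ∈ grassmannPart F 0 ∧ q ∈ A0) ∨ (h ∈ grassmannPart F 1 ∧ q ∈ A1)) →
      ((k ∈ grassmannPart F 0 ∧ r ∈ A0) ∨ (k ∈ grassmannPart F 1 ∧ r ∈ A1)) →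
      envMul F A (envMul F A (g ⊗ₜ[F] p) (h ⊗ₜ[F] q)) (k ⊗ₜ[F] r)
        + envMul F A (envMul F A (k ⊗ₜ[F] r) (h ⊗ₜ[F] q)) (g ⊗ₜ[F] p) = 0 := by
    intro g h k p q r hgp hhq hkr
    rw [hμt, hμt, hμt, hμt]
    rcases hgp with ⟨hg, hp⟩ | ⟨hg, hp⟩
    · rw [h1 p hp q, zero_mul,
        hrqp0 r q p (hhq.imp And.right And.right) (hkr.imp And.right And.right) hp,
        tmul_zero, tmul_zero, add_zero]
    · rcases hhq with ⟨hh, hq⟩ | ⟨hh, hq⟩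
      · rcases hkr with ⟨hk, hr⟩ | ⟨hk, hr⟩
        · rw [hPmul r (hA0P r hr) p q, h1 r hr q, zero_mul, tmul_zero, tmul_zero, add_zero]
        · rw [← hskewA p hp q hq r hr, grass_sign_skew hg hh hk, neg_tmul]
          exact add_neg_cancel _
      · rw [hql p q r hq (Or.inr hp),
          hql r q p hq (hkr.imp And.right And.right),
          tmul_zero, tmul_zero, add_zero]
  -- core computation for the Jordan identity, on pure homogeneous tensors
  have hjordcore : ∀ (g h k : GrassmannAlg F) (p q r : A),
      ((g ∈ grassmannPart F 0 ∧ p ∈ A0) ∨ (g ∈ grassmannPart F 1 ∧ p ∈ A1)) →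
      ((h ∈ grassmannPart F 0 ∧ q ∈ A0) ∨ (h ∈ grassmannPart F 1 ∧ q ∈ A1)) →
      ((k ∈ grassmannPart F 0 ∧ r ∈ A0) ∨ (k ∈ grassmannPart F 1 ∧ r ∈ A1)) →
      envMul F A (envMul F A (g ⊗ₜ[F] p) (h ⊗ₜ[F] q)
          + envMul F A (h ⊗ₜ[F] q) (g ⊗ₜ[F] p)) (k ⊗ₜ[F] r)
        + envMul F A (k ⊗ₜ[F] r) (envMul F A (g ⊗ₜ[F] p) (h ⊗ₜ[F] q)
          + envMul F A (h ⊗ₜ[F] q) (g ⊗ₜ[F] p)) = 0 := by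
    intro g h k p q r hgp hhq hkr
    simp only [hμt, map_add, LinearMap.add_apply, hμt]
    rcases hhq with ⟨hh, hq⟩ | ⟨hh, hq⟩
    · rw [h1 q hq p, zero_mul, mul_zero, tmul_zero, tmul_zero]
      rcases hgp with ⟨hg, hp⟩ | ⟨hg, hp⟩
      · rw [h1 p hp q, zero_mul, mul_zero, tmul_zero, tmul_zero]
        abel
      · rcases hkr with ⟨hk, hr⟩ | ⟨hk, hr⟩
        · rw [hPmul r (hA0P r hr) p q, h1 r hr (p * q), tmul_zero, tmul_zero]
          abel
        · rw [← h2 (p * q) (hg10 p hp q hq) r hr, grass_sign_oe hg hh hk, neg_tmul]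
          abel
    · rcases hgp with ⟨hg, hp⟩ | ⟨hg, hp⟩
      · rw [h1 p hp q, zero_mul, mul_zero, tmul_zero, tmul_zero]
        rcases hkr with ⟨hk, hr⟩ | ⟨hk, hr⟩
        · rw [hPmul r (hA0P r hr) q p, h1 r hr (q * p), tmul_zero, tmul_zero]
          abel
        · rw [← h2 (q * p) (hg10 q hq p hp) r hr, grass_sign_oe hh hg hk, neg_tmul]
          abel
      · rw [h1 (p * q) (hg11 p hp q hq) r, h1 (q * p) (hg11 q hq p hp) r,
          tmul_zero, tmul_zero]
        rcases hkr with ⟨hk, hr⟩ | ⟨hk, hr⟩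
        · rw [h1 r hr (p * q), h1 r hr (q * p), tmul_zero, tmul_zero]
          abel
        · rw [h2 p hp q hq, grass_odd_anticomm hg hh, mul_neg, neg_tmul]
          abel
  have hEnv : grassmannEnvelope F A A0 A1 = Submodule.span F
      {u : GrassmannAlg F ⊗[F] A |
        (∃ g ∈ grassmannPart F 0, ∃ b ∈ A0, g ⊗ₜ[F] b = u) ∨
        (∃ g ∈ grassmannPart F 1, ∃ b ∈ A1, g ⊗ₜ[F] b = u)} := rfl
  -- skew-symmetry on the envelope
  have hkeySkew : ∀ a ∈ grassmannEnvelope F A A0 A1, ∀ b ∈ grassmannEnvelope F A A0 A1,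
      ∀ x ∈ grassmannEnvelope F A A0 A1,
      envMul F A (envMul F A a x) b + envMul F A (envMul F A b x) a = 0 := by
    intro a ha
    rw [hEnv] at ha
    induction ha using Submodule.span_induction with
    | mem a hamem =>
      intro b hb
      rw [hEnv] at hb
      induction hb using Submodule.span_induction with
      | mem b hbmem =>
        intro x hx
        rw [hEnv] at hx
        induction hx using Submodule.span_induction with
        | mem x hxmem =>
          obtain ⟨g, p, hgp, rfl⟩ := hform hamem
          obtain ⟨k, r, hkr, rfl⟩ := hform hbmem
          obtain ⟨h', q, hhq, rfl⟩ := hform hxmem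
          exact hskewcore g h' k p q r hgp hhq hkr
        | zero => simp
        | add u v _ _ ihu ihv =>
          simp only [map_add, LinearMap.add_apply]
          rw [add_add_add_comm, ihu, ihv, add_zero]
        | smul c u _ ihu =>
          simp only [map_smul, LinearMap.smul_apply, ← smul_add]
          rw [ihu, smul_zero]
      | zero => intro x hx; simp
      | add u v _ _ ihu ihv =>
        intro x hx
        simp only [map_add, LinearMap.add_apply]
        rw [add_add_add_comm, ihu x hx, ihv x hx, add_zero]
      | smul c u _ ihu =>
        intro x hx
        simp only [map_smul, LinearMap.smul_apply, ← smul_add]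
        rw [ihu x hx, smul_zero]
    | zero => intro b hb x hx; simp
    | add u v _ _ ihu ihv =>
      intro b hb x hx
      simp only [map_add, LinearMap.add_apply]
      rw [add_add_add_comm, ihu b hb x hx, ihv b hb x hx, add_zero]
    | smul c u _ ihu =>
      intro b hb x hx
      simp only [map_smul, LinearMap.smul_apply, ← smul_add]
      rw [ihu b hb x hx, smul_zero]
  -- Jordan identity on the envelope
  have hkeyJord : ∀ x ∈ grassmannEnvelope F A A0 A1, ∀ y ∈ grassmannEnvelope F A A0 A1,
      ∀ z ∈ grassmannEnvelope F A A0 A1,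
      envMul F A (envMul F A x y + envMul F A y x) z
        + envMul F A z (envMul F A x y + envMul F A y x) = 0 := by
    intro x hx
    rw [hEnv] at hx
    induction hx using Submodule.span_induction with
    | mem x hxmem =>
      intro y hy
      rw [hEnv] at hy
      induction hy using Submodule.span_induction with
      | mem y hymem =>
        intro z hz
        rw [hEnv] at hz
        induction hz using Submodule.span_induction with
        | mem z hzmem =>
          obtain ⟨g, p, hgp, rfl⟩ := hform hxmem
          obtain ⟨h', q, hhq, rfl⟩ := hform hymem
          obtain ⟨k, r, hkr, rfl⟩ := hform hzmem
          exact hjordcore g h' k p q r hgp hhq hkr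
        | zero => simp
        | add z1 z2 _ _ ih1 ih2 =>
          have e12 : (envMul F A (envMul F A x y + envMul F A y x) z1
                + envMul F A z1 (envMul F A x y + envMul F A y x))
              + (envMul F A (envMul F A x y + envMul F A y x) z2
                + envMul F A z2 (envMul F A x y + envMul F A y x)) = 0 := by
            rw [ih1, ih2, add_zero]
          rw [← e12]
          simp only [map_add, LinearMap.add_apply]
          all_goals abel
        | smul c z1 _ ih1 =>
          have e1 : c • (envMul F A (envMul F A x y + envMul F A y x) z1
              + envMul F A z1 (envMul F A x y + envMul F A y x)) = 0 := by
            rw [ih1, smul_zero]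
          rw [← e1]
          simp only [map_add, map_smul, LinearMap.add_apply, LinearMap.smul_apply, smul_add]
          all_goals abel
      | zero => intro z hz; simp
      | add y1 y2 _ _ ih1 ih2 =>
        intro z hz
        have e12 : (envMul F A (envMul F A x y1 + envMul F A y1 x) z
              + envMul F A z (envMul F A x y1 + envMul F A y1 x))
            + (envMul F A (envMul F A x y2 + envMul F A y2 x) z
              + envMul F A z (envMul F A x y2 + envMul F A y2 x)) = 0 := by
          rw [ih1 z hz, ih2 z hz, add_zero]
        rw [← e12]
        simp only [map_add, LinearMap.add_apply]
        all_goals abel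
      | smul c y1 _ ih1 =>
        intro z hz
        have e1 : c • (envMul F A (envMul F A x y1 + envMul F A y1 x) z
            + envMul F A z (envMul F A x y1 + envMul F A y1 x)) = 0 := by
          rw [ih1 z hz, smul_zero]
        rw [← e1]
        simp only [map_add, map_smul, LinearMap.add_apply, LinearMap.smul_apply, smul_add]
        all_goals abel
    | zero => intro y hy z hz; simp
    | add x1 x2 _ _ ih1 ih2 =>
      intro y hy z hz
      have e12 : (envMul F A (envMul F A x1 y + envMul F A y x1) z
            + envMul F A z (envMul F A x1 y + envMul F A y x1))
          + (envMul F A (envMul F A x2 y + envMul F A y x2) z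
            + envMul F A z (envMul F A x2 y + envMul F A y x2)) = 0 := by
        rw [ih1 y hy z hz, ih2 y hy z hz, add_zero]
      rw [← e12]
      simp only [map_add, LinearMap.add_apply]
      all_goals abel
    | smul c x1 _ ih1 =>
      intro y hy z hz
      have e1 : c • (envMul F A (envMul F A x1 y + envMul F A y x1) z
          + envMul F A z (envMul F A x1 y + envMul F A y x1)) = 0 := by
        rw [ih1 y hy z hz, smul_zero]
      rw [← e1]
      simp only [map_add, map_smul, LinearMap.add_apply, LinearMap.smul_apply, smul_add]
      all_goals abel
  refine ⟨?_, hkeyJord⟩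
  intro a ha b hb x hx
  exact eq_neg_of_add_eq_zero_left (hkeySkew a ha b hb x hx)
end

section
/- With ξ(x,y,z,t) = z(xy)·t + x(zt)·y in an algebra of the variety 𝔐, the polynomial ξ is invariant under the Klein four-group acting on its variables: ξ(x,y,z,t) = ξ(y,x,t,z) = ξ(t,z,y,x). -/
/-- ξ(x,y,z,t) = (z(xy))t + (x(zt))y. -/
def xiP {A : Type*} [NonUnitalNonAssocRing A] (x y z t : A) : A :=
  (z * (x * y)) * t + (x * (z * t)) * y

theorem stmt11 {F : Type*} [Field F] (h2 : (2 : F) ≠ 0) (h3 : (3 : F) ≠ 0)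
    {A : Type*} [NonUnitalNonAssocRing A] [Module F A]
    [SMulCommClass F A A] [IsScalarTower F A A]
    (hra : ∀ x y : A, (x * y) * y = x * (y * y))
    (hmb : ∀ x y z t : A, (x * y) * (z * t) = 0)
    (hjn : ∀ x y z : A, (x * y + y * x) * z + z * (x * y + y * x) = 0)
    (hcc : ∀ x y z t : A,
      ((x * (y * z)) * x - x * ((y * z) * x)) * t
        - t * ((x * (y * z)) * x - x * ((y * z) * x)) = 0) :
    ∀ x y z t : A, xiP x y z t = xiP y x t z ∧ xiP x y z t = xiP t z y x := by
  -- linearized right alternativity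
  have fra : ∀ a b c : A, (a*b)*c + (a*c)*b - a*(b*c) - a*(c*b) = 0 := by
    intro a b c
    have h := hra a (b + c)
    have h1 := hra a b
    have h2 := hra a c
    simp only [mul_add, add_mul] at h
    calc (a*b)*c + (a*c)*b - a*(b*c) - a*(c*b)
        = (a*b*b + a*c*b + (a*b*c + a*c*c))
          - (a*(b*b) + a*(c*b) + (a*(b*c) + a*(c*c)))
          - ((a*b)*b - a*(b*b)) - ((a*c)*c - a*(c*c)) := by abel
      _ = 0 := by rw [h, h1, h2]; abel
  -- expanded form of hjn
  have gjn : ∀ a b c : A, (a*b)*c + (b*a)*c + c*(a*b) + c*(b*a) = 0 := by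
    intro a b c
    have h := hjn a b c
    simp only [add_mul, mul_add] at h
    calc (a*b)*c + (b*a)*c + c*(a*b) + c*(b*a)
        = (a*b)*c + (b*a)*c + (c*(a*b) + c*(b*a)) := by abel
      _ = 0 := h
  -- left multiple of hjn, expanded
  have gjl : ∀ a b c d : A,
      a*((b*c)*d) + a*((c*b)*d) + a*(d*(b*c)) + a*(d*(c*b)) = 0 := by
    intro a b c d
    have h : a * ((b*c + c*b)*d + d*(b*c + c*b)) = 0 := by rw [hjn, mul_zero]
    simp only [mul_add, add_mul] at h
    calc a*((b*c)*d) + a*((c*b)*d) + a*(d*(b*c)) + a*(d*(c*b))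
        = a*((b*c)*d) + a*((c*b)*d) + (a*(d*(b*c)) + a*(d*(c*b))) := by abel
      _ = 0 := h
  -- skew-symmetry of ξ in the first pair of variables
  have main : ∀ x y z t : A, xiP x y z t + xiP y x z t = 0 := by
    intro x y z t
    have key : (2:ℤ) • (xiP x y z t + xiP y x z t)
        = (2:ℤ) • ((z*(x*y))*t + (z*t)*(x*y) - z*((x*y)*t) - z*(t*(x*y)))
        + (2:ℤ) • ((z*(y*x))*t + (z*t)*(y*x) - z*((y*x)*t) - z*(t*(y*x)))
        - (((z*t)*x)*y + ((z*t)*y)*x - (z*t)*(x*y) - (z*t)*(y*x))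
        + ((x*(z*t))*y + (x*y)*(z*t) - x*((z*t)*y) - x*(y*(z*t)))
        + ((y*(z*t))*x + (y*x)*(z*t) - y*((z*t)*x) - y*(x*(z*t)))
        + (((z*t)*x)*y + (x*(z*t))*y + y*((z*t)*x) + y*(x*(z*t)))
        - (3:ℤ) • ((x*y)*(z*t) + (y*x)*(z*t) + (z*t)*(x*y) + (z*t)*(y*x))
        + (((z*t)*y)*x + (y*(z*t))*x + x*((z*t)*y) + x*(y*(z*t)))
        + (2:ℤ) • (z*((x*y)*t) + z*((y*x)*t) + z*(t*(x*y)) + z*(t*(y*x)))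
        + (2:ℤ) • ((x*y)*(z*t))
        + (2:ℤ) • ((y*x)*(z*t)) := by
      simp only [xiP]; abel
    rw [fra z (x*y) t, fra z (y*x) t, fra (z*t) x y, fra x (z*t) y,
        fra y (z*t) x, gjn (z*t) x y, gjn x y (z*t), gjn (z*t) y x,
        gjl z x y t, hmb x y z t, hmb y x z t] at key
    simp only [smul_zero, add_zero, sub_zero, zero_add] at key
    have keyF : (2:F) • (xiP x y z t + xiP y x z t) = 0 := by
      rw [show (2:F) = ((2:ℤ):F) by norm_num, Int.cast_smul_eq_zsmul, key]
    calc xiP x y z t + xiP y x z t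
        = (2:F)⁻¹ • ((2:F) • (xiP x y z t + xiP y x z t)) :=
          (inv_smul_smul₀ h2 _).symm
      _ = 0 := by rw [keyF, smul_zero]
  -- the evident symmetry ξ(x,y,z,t) = ξ(z,t,x,y)
  have sym : ∀ a b c d : A, xiP a b c d = xiP c d a b := by
    intro a b c d; simp only [xiP]; exact add_comm _ _
  intro x y z t
  have e1 : xiP x y z t = xiP y x t z := by
    have ha := main x y t z
    have hb := main t z x y
    rw [sym t z x y, sym z t x y] at hb
    exact (add_left_cancel (ha.trans hb.symm)).symm
  refine ⟨e1, ?_⟩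
  rw [sym t z y x]
  exact e1
end

section
/- In an algebra A of the variety 𝔐, define φ(x,y,z,t) = Σ_{σ ∈ C₄} z_σ(x_σ y_σ)·t_σ, where the cyclic group C₄ acts on all four variables (x,y,z,t). Then for all a,b,x,y,z ∈ A: φ(ab, x, y, z) = 0. -/
/-- φ(x,y,z,t) = Σ_{σ∈C₄} (z_σ(x_σ y_σ))t_σ, the cyclic sum over (x,y,z,t). -/
def phiP {A : Type*} [NonUnitalNonAssocRing A] (x y z t : A) : A :=
  (z * (x * y)) * t + (t * (y * z)) * x + (x * (z * t)) * y + (y * (t * x)) * z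

theorem stmt12 {F : Type*} [Field F] (h2 : (2 : F) ≠ 0) (h3 : (3 : F) ≠ 0)
    {A : Type*} [NonUnitalNonAssocRing A] [Module F A]
    [SMulCommClass F A A] [IsScalarTower F A A]
    (hra : ∀ x y : A, (x * y) * y = x * (y * y))
    (hmb : ∀ x y z t : A, (x * y) * (z * t) = 0)
    (hjn : ∀ x y z : A, (x * y + y * x) * z + z * (x * y + y * x) = 0)
    (hcc : ∀ x y z t : A,
      ((x * (y * z)) * x - x * ((y * z) * x)) * t
        - t * ((x * (y * z)) * x - x * ((y * z) * x)) = 0) :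
    ∀ a b x y z : A, phiP (a * b) x y z = 0 := by
  -- cancellation of 2
  have tc : ∀ v : A, v + v = 0 → v = 0 := by
    intro v hv
    have h : (2 : F) • v = 0 := by rw [two_smul]; exact hv
    have h' := congrArg (fun w => (2 : F)⁻¹ • w) h
    simpa [smul_smul, inv_mul_cancel₀ h2] using h'
  -- linearized right alternativity
  have ra' : ∀ u v w : A, (u*v)*w + (u*w)*v = u*(v*w) + u*(w*v) := by
    intro u v w
    have h := hra u (v+w)
    simp only [mul_add, add_mul] at h
    linear_combination (norm := abel1) h - hra u v - hra u w
  -- expanded Jordan-nilpotence identity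
  have jn' : ∀ u v w : A, (u*v)*w + (v*u)*w + w*(u*v) + w*(v*u) = 0 := by
    intro u v w
    have h := hjn u v w
    simp only [add_mul, mul_add] at h
    linear_combination (norm := abel1) h
  -- f5 : d(uv) + d(vu) = 0 for d = p*q
  have f5 : ∀ p q u v : A, (p*q)*(u*v) + (p*q)*(v*u) = 0 := by
    intro p q u v
    linear_combination (norm := abel1) jn' u v (p*q) - hmb u v p q - hmb v u p q
  -- f6 : (u d)v = u(dv) + u(vd)
  have f6 : ∀ p q u v : A, (u*(p*q))*v = u*((p*q)*v) + u*(v*(p*q)) := by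
    intro p q u v
    linear_combination (norm := abel1) ra' u (p*q) v - hmb u v p q
  -- f1 : (d u)v = 0
  have f1 : ∀ p q u v : A, ((p*q)*u)*v = 0 := by
    intro p q u v
    have skew : ((p*q)*u)*v + ((p*q)*v)*u = 0 := by
      linear_combination (norm := abel1) ra' (p*q) u v + f5 p q u v
    have sym : ((p*q)*u)*v - ((p*q)*v)*u = 0 := by
      linear_combination (norm := abel1)
        jn' u (p*q) v - f6 p q u v - jn' v (p*q) u + f6 p q v u
    exact tc _ (by linear_combination (norm := abel1) skew + sym)
  -- r1 : (y(dx))z + z(y(dx)) = 0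
  have r1 : ∀ p q x y z : A, (y*((p*q)*x))*z + z*(y*((p*q)*x)) = 0 := by
    intro p q x y z
    have e1 : ((p*q)*x)*y = 0 := f1 p q x y
    have e2 : (((p*q)*x)*y)*z = 0 := by rw [e1, zero_mul]
    have e3 : z*(((p*q)*x)*y) = 0 := by rw [e1, mul_zero]
    linear_combination (norm := abel1) jn' y ((p*q)*x) z - e2 - e3
  -- r2 : z(y(dx)) = (z(dx))y
  have r2 : ∀ p q x y z : A, z*(y*((p*q)*x)) = (z*((p*q)*x))*y := by
    intro p q x y z
    have e3 : z*(((p*q)*x)*y) = 0 := by rw [f1 p q x y, mul_zero]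
    linear_combination (norm := abel1) - f6 (p*q) x z y - e3
  -- fs : y(dx) + y(xd) + x(yd) + x(dy) = 0
  have fs : ∀ p q x y : A,
      y*((p*q)*x) + y*(x*(p*q)) + x*(y*(p*q)) + x*((p*q)*y) = 0 := by
    intro p q x y
    have e1 : ((p*q)*y)*x = 0 := f1 p q y x
    linear_combination (norm := abel1) jn' y (p*q) x - e1 - f6 p q y x
  -- kc : K t = t K for K = u(vd) + v(ud)
  have kc : ∀ p q u v t : A,
      (u*(v*(p*q)))*t + (v*(u*(p*q)))*t - t*(u*(v*(p*q))) - t*(v*(u*(p*q))) = 0 := by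
    intro p q u v t
    have h := hcc (u+v) p q t
    simp only [mul_add, add_mul, sub_mul, mul_sub] at h
    have h1 := hcc u p q t
    have h2' := hcc v p q t
    simp only [sub_mul, mul_sub] at h1 h2'
    have g1t : ((u*(p*q))*v)*t = (u*((p*q)*v))*t + (u*(v*(p*q)))*t := by
      rw [f6 p q u v, add_mul]
    have g1l : t*((u*(p*q))*v) = t*(u*((p*q)*v)) + t*(u*(v*(p*q))) := by
      rw [f6 p q u v, mul_add]
    have g2t : ((v*(p*q))*u)*t = (v*((p*q)*u))*t + (v*(u*(p*q)))*t := by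
      rw [f6 p q v u, add_mul]
    have g2l : t*((v*(p*q))*u) = t*(v*((p*q)*u)) + t*(v*(u*(p*q))) := by
      rw [f6 p q v u, mul_add]
    linear_combination (norm := abel1) h - h1 - h2' - g1t - g2t + g1l + g2l
  -- u12 : z(y(dx)) + z(x(dy)) = 0
  have u12 : ∀ p q x y z : A,
      z*(y*((p*q)*x)) + z*(x*((p*q)*y)) = 0 := by
    intro p q x y z
    have fsz : z*(y*((p*q)*x)) + z*(y*(x*(p*q))) + z*(x*(y*(p*q))) + z*(x*((p*q)*y)) = 0 := by
      have h : z * (y*((p*q)*x) + y*(x*(p*q)) + x*(y*(p*q)) + x*((p*q)*y)) = 0 := by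
        rw [fs p q x y, mul_zero]
      simpa only [mul_add] using h
    have fsz2 : (y*((p*q)*x))*z + (y*(x*(p*q)))*z + (x*(y*(p*q)))*z + (x*((p*q)*y))*z = 0 := by
      have h : (y*((p*q)*x) + y*(x*(p*q)) + x*(y*(p*q)) + x*((p*q)*y)) * z = 0 := by
        rw [fs p q x y, zero_mul]
      simpa only [add_mul] using h
    refine tc _ ?_
    linear_combination (norm := abel1)
      fsz - fsz2 + kc p q x y z + r1 p q x y z + r1 p q y x z
  -- u23 : z(y(dx)) + y(z(dx)) = 0
  have u23 : ∀ p q x y z : A,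
      z*(y*((p*q)*x)) + y*(z*((p*q)*x)) = 0 := by
    intro p q x y z
    linear_combination (norm := abel1) r2 p q x z y + r1 p q x y z
  -- main statement
  intro a b x y z
  show (y*((a*b)*x))*z + (z*(x*y))*(a*b) + ((a*b)*(y*z))*x + (x*(z*(a*b)))*y = 0
  have hA : (z*(x*y))*(a*b) = 0 := hmb z (x*y) a b
  have hB : ((a*b)*(y*z))*x = 0 := by rw [hmb a b y z, zero_mul]
  have H1y : ((x*(a*b))*z)*y = (x*((a*b)*z))*y + (x*(z*(a*b)))*y := by
    rw [f6 a b x z, add_mul]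
  have H2 : ((x*(a*b))*z)*y = 0 := f1 x (a*b) z y
  linear_combination (norm := abel1)
    hA + hB - H1y + H2 + r1 a b x y z - r1 a b z x y + u12 a b z x y - u23 a b x y z
end

section
/- In an algebra A of the variety 𝔐, define ψ(x,y,z,t) = Σ_{σ∈C₃ on (x,y,z)} z_σ(x_σ y_σ)·t (cyclic sum over x,y,z of (xy)L_z R_t). Then ψ is skew-symmetric with respect to x, y, z. -/
/-- ψ(x,y,z,t) = cyclic sum over (x,y,z) of (z(xy))t. -/
def psiP {A : Type*} [NonUnitalNonAssocRing A] (x y z t : A) : A :=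
  (z * (x * y)) * t + (x * (y * z)) * t + (y * (z * x)) * t

theorem stmt14 {F : Type*} [Field F] (h2 : (2 : F) ≠ 0) (h3 : (3 : F) ≠ 0)
    {A : Type*} [NonUnitalNonAssocRing A] [Module F A]
    [SMulCommClass F A A] [IsScalarTower F A A]
    (hra : ∀ x y : A, (x * y) * y = x * (y * y))
    (hmb : ∀ x y z t : A, (x * y) * (z * t) = 0)
    (hjn : ∀ x y z : A, (x * y + y * x) * z + z * (x * y + y * x) = 0)
    (hcc : ∀ x y z t : A,
      ((x * (y * z)) * x - x * ((y * z) * x)) * t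
        - t * ((x * (y * z)) * x - x * ((y * z) * x)) = 0) :
    ∀ x y z t : A, psiP x y z t = -psiP y x z t ∧
      psiP x y z t = -psiP z y x t ∧ psiP x y z t = -psiP x z y t := by
  -- linearized right alternativity
  have lin : ∀ x y z : A, (x * y) * z + (x * z) * y = x * (y * z + z * y) := by
    intro x y z
    have h := hra x (y + z)
    simp only [mul_add, add_mul, hra] at h
    rw [mul_add]
    linear_combination (norm := abel) h
  -- the fully symmetric element B vanishes
  have hB : ∀ x y z : A,
      z * (x * y + y * x) + x * (y * z + z * y) + y * (z * x + x * z) = 0 := by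
    intro x y z
    have e1 := lin x y z
    have e2 := lin y x z
    have e3 := lin z y x
    have j1 := hjn x y z
    have j2 := hjn y z x
    have j3 := hjn z x y
    simp only [mul_add, add_mul] at e1 e2 e3 j1 j2 j3
    have hBB : (z * (x * y + y * x) + x * (y * z + z * y) + y * (z * x + x * z)) +
        (z * (x * y + y * x) + x * (y * z + z * y) + y * (z * x + x * z)) = 0 := by
      simp only [mul_add]
      linear_combination (norm := abel) j1 + j2 + j3 - e1 - e2 - e3
    set B : A := z * (x * y + y * x) + x * (y * z + z * y) + y * (z * x + x * z)
    have h2B : (2 : F) • B = 0 := by rw [two_smul]; exact hBB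
    calc B = (2 : F)⁻¹ • ((2 : F) • B) := by
          rw [smul_smul, inv_mul_cancel₀ h2, one_smul]
      _ = 0 := by rw [h2B, smul_zero]
  -- each transposition's symmetric part is B * t = 0
  have key : ∀ x y z t : A, psiP x y z t + psiP y x z t = 0 ∧
      psiP x y z t + psiP z y x t = 0 ∧ psiP x y z t + psiP x z y t = 0 := by
    intro x y z t
    have gen : ∀ a b c : A,
        (c * (a * b)) * t + (a * (b * c)) * t + (b * (c * a)) * t +
        ((c * (b * a)) * t + (b * (a * c)) * t + (a * (c * b)) * t) = 0 := by
      intro a b c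
      have : (c * (a * b)) * t + (a * (b * c)) * t + (b * (c * a)) * t +
          ((c * (b * a)) * t + (b * (a * c)) * t + (a * (c * b)) * t) =
          (c * (a * b + b * a) + a * (b * c + c * b) + b * (c * a + a * c)) * t := by
        simp only [mul_add, add_mul]
        abel
      rw [this, hB a b c, zero_mul]
    refine ⟨?_, ?_, ?_⟩
    · simpa [psiP] using gen x y z
    · -- swap x and z: psiP z y x t = (x*(z*y))*t + (z*(y*x))*t + (y*(x*z))*t
      have := gen y x z
      simp only [psiP]
      calc z * (x * y) * t + x * (y * z) * t + y * (z * x) * t +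
          (x * (z * y) * t + z * (y * x) * t + y * (x * z) * t)
          = z * (y * x) * t + y * (x * z) * t + x * (z * y) * t +
            (z * (x * y) * t + x * (y * z) * t + y * (z * x) * t) := by abel
        _ = 0 := this
    · have := gen z y x
      simp only [psiP]
      calc z * (x * y) * t + x * (y * z) * t + y * (z * x) * t +
          (y * (x * z) * t + x * (z * y) * t + z * (y * x) * t)
          = x * (z * y) * t + z * (y * x) * t + y * (x * z) * t +
            (x * (y * z) * t + y * (z * x) * t + z * (x * y) * t) := by abel
        _ = 0 := this
  intro x y z t
  obtain ⟨k1, k2, k3⟩ := key x y z t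
  exact ⟨by linear_combination (norm := abel) k1,
    by linear_combination (norm := abel) k2,
    by linear_combination (norm := abel) k3⟩
end

section
/- In an algebra A of the variety 𝔐, with ψ and φ as defined, the identity ψ(a,x,b,x) + (1/2)·φ(a,x,b,x) = 2·b(ax)·x holds for all a,b,x ∈ A (i.e., equals 2(ax)L_b R_x). -/
theorem stmt15 {F : Type*} [Field F] (h2 : (2 : F) ≠ 0) (h3 : (3 : F) ≠ 0)
    {A : Type*} [NonUnitalNonAssocRing A] [Module F A]
    [SMulCommClass F A A] [IsScalarTower F A A]
    (hra : ∀ x y : A, (x * y) * y = x * (y * y))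
    (hmb : ∀ x y z t : A, (x * y) * (z * t) = 0)
    (hjn : ∀ x y z : A, (x * y + y * x) * z + z * (x * y + y * x) = 0)
    (hcc : ∀ x y z t : A,
      ((x * (y * z)) * x - x * ((y * z) * x)) * t
        - t * ((x * (y * z)) * x - x * ((y * z) * x)) = 0) :
    ∀ a b x : A, psiP a x b x + (2 : F)⁻¹ • phiP a x b x = (2 : F) • ((b * (a * x)) * x) := by
  intro a b x
  have ral : ∀ m p q : A,
      (m * p) * q + (m * q) * p - m * (p * q) - m * (q * p) = 0 := by
    intro m p q
    have h := hra m (p + q)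
    calc (m * p) * q + (m * q) * p - m * (p * q) - m * (q * p)
        = (m * (p + q)) * (p + q) - m * ((p + q) * (p + q)) := by
          simp only [mul_add, add_mul, hra]; abel
      _ = 0 := by rw [h, sub_self]
  have ralr : ∀ m p q g : A,
      ((m * p) * q) * g + ((m * q) * p) * g - (m * (p * q)) * g - (m * (q * p)) * g = 0 := by
    intro m p q g
    have h := congrArg (fun v => v * g) (ral m p q)
    simpa [add_mul, sub_mul] using h
  have rall : ∀ m p q g : A,
      g * ((m * p) * q) + g * ((m * q) * p) - g * (m * (p * q)) - g * (m * (q * p)) = 0 := by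
    intro m p q g
    have h := congrArg (fun v => g * v) (ral m p q)
    simpa [mul_add, mul_sub] using h
  have jnE : ∀ m p q : A,
      (m * p) * q + (p * m) * q + q * (m * p) + q * (p * m) = 0 := by
    intro m p q
    have h := hjn m p q
    calc (m * p) * q + (p * m) * q + q * (m * p) + q * (p * m)
        = (m * p + p * m) * q + q * (m * p + p * m) := by
          simp only [mul_add, add_mul]; abel
      _ = 0 := h
  have jnr : ∀ m p q g : A,
      ((m * p) * q) * g + ((p * m) * q) * g + (q * (m * p)) * g + (q * (p * m)) * g = 0 := by
    intro m p q g
    have h := congrArg (fun v => v * g) (jnE m p q)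
    simpa [add_mul] using h
  have jnl : ∀ m p q g : A,
      g * ((m * p) * q) + g * ((p * m) * q) + g * (q * (m * p)) + g * (q * (p * m)) = 0 := by
    intro m p q g
    have h := congrArg (fun v => g * v) (jnE m p q)
    simpa [mul_add] using h
  have cert : ((8 : ℤ) • ((b * (a * x)) * x + (a * (x * b)) * x + (x * (b * a)) * x) + (4 : ℤ) • ((b * (a * x)) * x + (x * (x * b)) * a + (a * (b * x)) * x + (x * (x * a)) * b)) - (16 : ℤ) • ((b * (a * x)) * x) =
      (-2 : ℤ) • ((a * x) * (b * x) + (a * (b * x)) * x - a * (x * (b * x)) - a * ((b * x) * x)) +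
      (4 : ℤ) • ((b * a) * (x * x) + (b * (x * x)) * a - b * (a * (x * x)) - b * ((x * x) * a)) +
      (-6 : ℤ) • ((b * x) * (a * x) + (b * (a * x)) * x - b * (x * (a * x)) - b * ((a * x) * x)) +
      (-4 : ℤ) • ((b * x) * (x * a) + (b * (x * a)) * x - b * (x * (x * a)) - b * ((x * a) * x)) +
      (2 : ℤ) • ((x * a) * (x * b) + (x * (x * b)) * a - x * (a * (x * b)) - x * ((x * b) * a)) +
      (2 : ℤ) • ((x * b) * (x * a) + (x * (x * a)) * b - x * (b * (x * a)) - x * ((x * a) * b)) +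
      (4 : ℤ) • ((x * x) * (b * a) + (x * (b * a)) * x - x * (x * (b * a)) - x * ((b * a) * x)) +
      (5 : ℤ) • (((a * b) * x) * x + ((a * b) * x) * x - (a * b) * (x * x) - (a * b) * (x * x)) +
      (2 : ℤ) • (((a * x) * b) * x + ((a * x) * x) * b - (a * x) * (b * x) - (a * x) * (x * b)) +
      (1 : ℤ) • (((b * a) * x) * x + ((b * a) * x) * x - (b * a) * (x * x) - (b * a) * (x * x)) +
      (-2 : ℤ) • (((b * x) * a) * x + ((b * x) * x) * a - (b * x) * (a * x) - (b * x) * (x * a)) +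
      (2 : ℤ) • (((x * a) * b) * x + ((x * a) * x) * b - (x * a) * (b * x) - (x * a) * (x * b)) +
      (2 : ℤ) • (((x * b) * a) * x + ((x * b) * x) * a - (x * b) * (a * x) - (x * b) * (x * a)) +
      (2 : ℤ) • (((x * x) * a) * b + ((x * x) * b) * a - (x * x) * (a * b) - (x * x) * (b * a)) +
      (-4 : ℤ) • (((a * b) * x) * x + ((a * x) * b) * x - (a * (b * x)) * x - (a * (x * b)) * x) +
      (2 : ℤ) • (((b * x) * x) * a + ((b * x) * x) * a - (b * (x * x)) * a - (b * (x * x)) * a) +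
      (-6 : ℤ) • (((x * a) * b) * x + ((x * b) * a) * x - (x * (a * b)) * x - (x * (b * a)) * x) +
      (-2 : ℤ) • (((x * a) * x) * b + ((x * x) * a) * b - (x * (a * x)) * b - (x * (x * a)) * b) +
      (-2 : ℤ) • (((x * b) * x) * a + ((x * x) * b) * a - (x * (b * x)) * a - (x * (x * b)) * a) +
      (4 : ℤ) • (x * ((a * b) * x) + x * ((b * a) * x) + x * (x * (a * b)) + x * (x * (b * a))) +
      (-2 : ℤ) • (((a * b) * x) * x + ((b * a) * x) * x + (x * (a * b)) * x + (x * (b * a)) * x) +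
      (-2 : ℤ) • ((a * b) * (x * x) + (b * a) * (x * x) + (x * x) * (a * b) + (x * x) * (b * a)) +
      (2 : ℤ) • (x * ((a * x) * b) + x * ((x * a) * b) + x * (b * (a * x)) + x * (b * (x * a))) +
      (4 : ℤ) • (((a * x) * b) * x + ((x * a) * b) * x + (b * (a * x)) * x + (b * (x * a)) * x) +
      (-4 : ℤ) • (b * ((a * x) * x) + b * ((x * a) * x) + b * (x * (a * x)) + b * (x * (x * a))) +
      (2 : ℤ) • ((a * x) * (b * x) + (x * a) * (b * x) + (b * x) * (a * x) + (b * x) * (x * a)) +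
      (2 : ℤ) • ((a * (b * x)) * x + ((b * x) * a) * x + x * (a * (b * x)) + x * ((b * x) * a)) +
      (4 : ℤ) • ((a * (x * b)) * x + ((x * b) * a) * x + x * (a * (x * b)) + x * ((x * b) * a)) +
      (-2 : ℤ) • (x * ((b * x) * a) + x * ((x * b) * a) + x * (a * (b * x)) + x * (a * (x * b))) +
      (2 : ℤ) • ((b * x) * (a * x) + (x * b) * (a * x) + (a * x) * (b * x) + (a * x) * (x * b)) +
      (-2 : ℤ) • ((b * (a * x)) * x + ((a * x) * b) * x + x * (b * (a * x)) + x * ((a * x) * b)) +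
      (2 : ℤ) • (b * ((x * x) * a) + b * ((x * x) * a) + b * (a * (x * x)) + b * (a * (x * x))) +
      (2 : ℤ) • ((x * x) * (a * b) + (x * x) * (a * b) + (a * b) * (x * x) + (a * b) * (x * x)) +
      (-4 : ℤ) • ((x * (a * b)) * x + ((a * b) * x) * x + x * (x * (a * b)) + x * ((a * b) * x)) +
      (-2 : ℤ) • ((x * (a * x)) * b + ((a * x) * x) * b + b * (x * (a * x)) + b * ((a * x) * x)) +
      (-2 : ℤ) • ((x * (b * x)) * a + ((b * x) * x) * a + a * (x * (b * x)) + a * ((b * x) * x)) +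
      (8 : ℤ) • ((a * b) * (x * x)) := by
    abel
  rw [ral a x (b * x), ral b a (x * x), ral b x (a * x), ral b x (x * a), ral x a (x * b), ral x b (x * a), ral x x (b * a), ral (a * b) x x, ral (a * x) b x, ral (b * a) x x, ral (b * x) a x, ral (x * a) b x, ral (x * b) a x, ral (x * x) a b, ralr a b x x, ralr b x x a, ralr x a b x, ralr x a x b, ralr x b x a, jnl a b x x, jnr a b x x, jnE a b (x * x), jnl a x b x, jnr a x b x, jnl a x x b, jnE a x (b * x), jnE a (b * x) x, jnE a (x * b) x, jnl b x a x, jnE b x (a * x), jnE b (a * x) x, jnl x x a b, jnE x x (a * b), jnE x (a * b) x, jnE x (a * x) b, jnE x (b * x) a, hmb a b x x] at cert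
  simp only [smul_zero, add_zero, zero_add] at cert
  have key : (8 : ℤ) • ((b * (a * x)) * x + (a * (x * b)) * x + (x * (b * a)) * x) + (4 : ℤ) • ((b * (a * x)) * x + (x * (x * b)) * a + (a * (b * x)) * x + (x * (x * a)) * b) = (16 : ℤ) • ((b * (a * x)) * x) :=
    sub_eq_zero.mp cert
  have keyF : (8 : F) • ((b * (a * x)) * x + (a * (x * b)) * x + (x * (b * a)) * x) + (4 : F) • ((b * (a * x)) * x + (x * (x * b)) * a + (a * (b * x)) * x + (x * (x * a)) * b) = (16 : F) • ((b * (a * x)) * x) := by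
    calc (8 : F) • ((b * (a * x)) * x + (a * (x * b)) * x + (x * (b * a)) * x) + (4 : F) • ((b * (a * x)) * x + (x * (x * b)) * a + (a * (b * x)) * x + (x * (x * a)) * b)
        = ((8 : ℤ) : F) • ((b * (a * x)) * x + (a * (x * b)) * x + (x * (b * a)) * x) + ((4 : ℤ) : F) • ((b * (a * x)) * x + (x * (x * b)) * a + (a * (b * x)) * x + (x * (x * a)) * b) := by norm_num
      _ = (8 : ℤ) • ((b * (a * x)) * x + (a * (x * b)) * x + (x * (b * a)) * x) + (4 : ℤ) • ((b * (a * x)) * x + (x * (x * b)) * a + (a * (b * x)) * x + (x * (x * a)) * b) := by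
          rw [Int.cast_smul_eq_zsmul, Int.cast_smul_eq_zsmul]
      _ = (16 : ℤ) • ((b * (a * x)) * x) := key
      _ = ((16 : ℤ) : F) • ((b * (a * x)) * x) := (Int.cast_smul_eq_zsmul F _ _).symm
      _ = (16 : F) • ((b * (a * x)) * x) := by norm_num
  have h8 : (8 : F) ≠ 0 := by
    have e : (8 : F) = 2 * 2 * 2 := by norm_num
    rw [e]; exact mul_ne_zero (mul_ne_zero h2 h2) h2
  have hfin := congrArg (fun v => (8 : F)⁻¹ • v) keyF
  simp only [smul_add, smul_smul] at hfin
  have c1 : (8 : F)⁻¹ * 8 = 1 := inv_mul_cancel₀ h8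
  have c2 : (8 : F)⁻¹ * 4 = (2 : F)⁻¹ := by
    field_simp
    norm_num
  have c3 : (8 : F)⁻¹ * 16 = 2 := by
    field_simp
    norm_num
  rw [c1, c2, c3, one_smul] at hfin
  simp only [psiP, phiP, smul_add]
  simpa only [one_smul, smul_add] using hfin
end

section
/- In an algebra A of the variety 𝔐, the cyclic sum over (x,y,z) of φ(a,x,y,z) vanishes: φ(a,x,y,z) + φ(a,y,z,x) + φ(a,z,x,y) = 0 for all a,x,y,z ∈ A. -/
theorem stmt16 {F : Type*} [Field F] (h2 : (2 : F) ≠ 0) (h3 : (3 : F) ≠ 0)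
    {A : Type*} [NonUnitalNonAssocRing A] [Module F A]
    [SMulCommClass F A A] [IsScalarTower F A A]
    (hra : ∀ x y : A, (x * y) * y = x * (y * y))
    (hmb : ∀ x y z t : A, (x * y) * (z * t) = 0)
    (hjn : ∀ x y z : A, (x * y + y * x) * z + z * (x * y + y * x) = 0)
    (hcc : ∀ x y z t : A,
      ((x * (y * z)) * x - x * ((y * z) * x)) * t
        - t * ((x * (y * z)) * x - x * ((y * z) * x)) = 0) :
    ∀ a x y z : A, phiP a x y z + phiP a y z x + phiP a z x y = 0 := by
  have hR : ∀ p q r : A, (p*q)*r + (p*r)*q - p*(q*r) - p*(r*q) = 0 := fun p q r => by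
    linear_combination (norm := (simp only [mul_add, add_mul, mul_sub, sub_mul, mul_neg,
      neg_mul, mul_zero, zero_mul, smul_zero, smul_add, smul_sub, smul_neg]; module))
      hra p (q+r) - hra p q - hra p r
  intro a x y z
  have h4 : (4 : F) ≠ 0 := by
    have : (4 : F) = 2 * 2 := by norm_num
    rw [this]; exact mul_ne_zero h2 h2
  have key : (4 : F) • (phiP a x y z + phiP a y z x + phiP a z x y) = 0 := by
    simp only [phiP]
    linear_combination (norm := (simp only [mul_add, add_mul, mul_sub, sub_mul, mul_neg,
      neg_mul, mul_zero, zero_mul, smul_zero, smul_add, smul_sub, smul_neg]; module))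
      ((1 : F)) • (mul_eq_zero_of_left (hR a x y) z) +
        ((4 : F)) • (mul_eq_zero_of_right z (hjn a x y)) +
        ((-1 : F)) • (mul_eq_zero_of_left (hjn a x y) z) +
        ((-1 : F)) • (mul_eq_zero_of_left (hR a x z) y) +
        ((14 : F)) • (mul_eq_zero_of_right y (hjn a x z)) +
        ((1 : F)) • (mul_eq_zero_of_left (hjn a x z) y) +
        ((2 : F)) • (mul_eq_zero_of_right z (hjn a y x)) +
        ((1 : F)) • (mul_eq_zero_of_left (hjn a y x) z) +
        ((-3 : F)) • (mul_eq_zero_of_left (hR a y z) x) +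
        ((4 : F)) • (mul_eq_zero_of_right x (hjn a y z)) +
        ((5 : F)) • (mul_eq_zero_of_left (hjn a y z) x) +
        ((3 : F)) • (mul_eq_zero_of_left (hjn a z x) y) +
        ((4 : F)) • (mul_eq_zero_of_right x (hjn a z y)) +
        ((5 : F)) • (mul_eq_zero_of_left (hjn a z y) x) +
        ((5 : F)) • (mul_eq_zero_of_left (hR x a y) z) +
        ((3 : F)) • (mul_eq_zero_of_left (hR x a z) y) +
        ((-2 : F)) • (mul_eq_zero_of_right z (hjn x y a)) +
        ((-3 : F)) • (mul_eq_zero_of_left (hjn x y a) z) +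
        ((-5 : F)) • (mul_eq_zero_of_left (hR x y z) a) +
        ((4 : F)) • (mul_eq_zero_of_right a (hjn x y z)) +
        ((7 : F)) • (mul_eq_zero_of_left (hjn x y z) a) +
        ((3 : F)) • (mul_eq_zero_of_left (hjn x z a) y) +
        ((3 : F)) • (mul_eq_zero_of_left (hjn x z y) a) +
        ((9 : F)) • (mul_eq_zero_of_left (hR y a x) z) +
        ((5 : F)) • (mul_eq_zero_of_left (hR y a z) x) +
        ((-1 : F)) • (mul_eq_zero_of_left (hR y x z) a) +
        ((-3 : F)) • (mul_eq_zero_of_left (hjn y z a) x) +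
        ((-5 : F)) • (mul_eq_zero_of_left (hjn y z x) a) +
        ((5 : F)) • (mul_eq_zero_of_left (hR z a x) y) +
        ((3 : F)) • (mul_eq_zero_of_left (hR z a y) x) +
        ((5 : F)) • (mul_eq_zero_of_left (hR z x y) a) +
        ((14 : F)) • (hR y (a*x) z) +
        ((-4 : F)) • (hjn y z (a*x)) +
        ((4 : F)) • (hR z (a*x) y) +
        ((-2 : F)) • (hR (a*y) x z) +
        ((4 : F)) • (hR x (a*y) z) +
        ((-10 : F)) • (hjn x z (a*y)) +
        ((2 : F)) • (hR z (a*y) x) +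
        ((-2 : F)) • (hR (a*z) x y) +
        ((4 : F)) • (hR x (a*z) y) +
        ((-4 : F)) • (hR (x*a) y z) +
        ((14 : F)) • (hR y (x*a) z) +
        ((-4 : F)) • (hjn y z (x*a)) +
        ((4 : F)) • (hR z (x*a) y) +
        ((-4 : F)) • (hR (x*y) a z) +
        ((2 : F)) • (hjn (x*y) a z) +
        ((6 : F)) • (hR a (x*y) z) +
        ((-8 : F)) • (hjn a z (x*y)) +
        ((2 : F)) • (hjn (x*y) z a) +
        ((-6 : F)) • (hjn (x*z) a y) +
        ((2 : F)) • (hR a (x*z) y) +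
        ((6 : F)) • (hjn a y (x*z)) +
        ((2 : F)) • (hjn (x*z) y a) +
        ((-6 : F)) • (hR y (x*z) a) +
        ((-10 : F)) • (hR (y*a) x z) +
        ((4 : F)) • (hR x (y*a) z) +
        ((-10 : F)) • (hjn x z (y*a)) +
        ((2 : F)) • (hR z (y*a) x) +
        ((-6 : F)) • (hR (y*x) a z) +
        ((4 : F)) • (hR a (y*x) z) +
        ((-6 : F)) • (hjn a z (y*x)) +
        ((-2 : F)) • (hR z (y*x) a) +
        ((-2 : F)) • (hjn (y*z) a x) +
        ((6 : F)) • (hR a (y*z) x) +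
        ((-10 : F)) • (hjn a x (y*z)) +
        ((6 : F)) • (hjn (y*z) x a) +
        ((-2 : F)) • (hR x (y*z) a) +
        ((-8 : F)) • (hR (z*a) x y) +
        ((4 : F)) • (hR x (z*a) y) +
        ((-8 : F)) • (hR (z*x) a y) +
        ((8 : F)) • (hmb a x y z) +
        ((4 : F)) • (hmb a x z y) +
        ((8 : F)) • (hmb a y z x) +
        ((12 : F)) • (hmb x a y z)
  rw [← inv_smul_smul₀ h4 (phiP a x y z + phiP a y z x + phiP a z x y), key, smul_zero]
end

section
/- Let f(x,y,z₁,…,z_n) be a multilinear map into a vector space over a field, symmetric in x and y, such that the full symmetrization of f over each of the triples {x,y,z_i} (for every i = 1,…,n) vanishes (i.e., the cyclic sum over any triple consisting of x, y, and one z_i is zero). Then the span of { f^σ : σ a permutation of the variables } is already spanned by those f^σ with σ(x) = x. -/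
/-!
Write `g^σ v = g (v ∘ σ)`; the variable `x` then sits in slot `σ⁻¹ x` of `g^σ`. If that slot is
the one of `x`, there is nothing to do, and if it is the one of `y`, the symmetry in `x, y` moves
`x` back. If it is the slot of some `zᵢ`, the cyclic identity for `{x, y, zᵢ}`, evaluated at
`v ∘ σ`, writes `g^σ` as minus the sum of two permuted copies of `g`, in which `x` sits in the
slot of `x` and of `y` respectively.
-/

open Equiv

section PermArgs

variable {ι V W : Type*}

def permArgs (g : (ι → V) → W) (σ : Perm ι) : (ι → V) → W := fun v => g (v ∘ σ)

theorem permArgs_mul (g : (ι → V) → W) (σ ρ : Perm ι) :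
    permArgs g (σ * ρ) = permArgs (permArgs g ρ) σ :=
  rfl

theorem permArgs_mul_of_invariant {g : (ι → V) → W} {ρ : Perm ι} (h : permArgs g ρ = g)
    (σ : Perm ι) : permArgs g (σ * ρ) = permArgs g σ := by
  rw [permArgs_mul, h]

theorem permArgs_mem_span_fixing [DecidableEq ι] {R : Type*} [Ring R] [AddCommGroup W]
    [Module R W] {g : (ι → V) → W} {a b : ι} (hab : a ≠ b) (hsym : permArgs g (swap a b) = g)
    (hcyc : ∀ i, i ≠ a → i ≠ b → g + permArgs g (swap b i * swap a b)
      + permArgs g (swap b i * swap a b * (swap b i * swap a b)) = 0)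
    (σ : Perm ι) :
    permArgs g σ ∈ Submodule.span R {h | ∃ τ : Perm ι, τ a = a ∧ h = permArgs g τ} := by
  set S := Submodule.span R {h | ∃ τ : Perm ι, τ a = a ∧ h = permArgs g τ}
  have mem_of_fix : ∀ τ : Perm ι, τ a = a → permArgs g τ ∈ S :=
    fun τ hτ => Submodule.subset_span ⟨τ, hτ, rfl⟩
  have mem_of_swap : ∀ τ : Perm ι, τ b = a → permArgs g τ ∈ S := by
    intro τ hτ
    rw [← permArgs_mul_of_invariant hsym]
    exact mem_of_fix _ (by simpa using hτ)
  have hσi : σ (σ.symm a) = a := σ.apply_symm_apply a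
  generalize σ.symm a = i at hσi
  by_cases hia : i = a
  · exact mem_of_fix σ (hia ▸ hσi)
  by_cases hib : i = b
  · exact mem_of_swap σ (hib ▸ hσi)
  set c := swap b i * swap a b
  have hca : c a = i := by simp [c]
  have hcb : c b = a := by simp [c, swap_apply_of_ne_of_ne hab (Ne.symm hia)]
  have key : permArgs g σ + permArgs g (σ * c) + permArgs g (σ * (c * c)) = 0 :=
    funext fun v => congrFun (hcyc i hia hib) (v ∘ σ)
  rw [eq_neg_of_add_eq_zero_left (a := permArgs g σ) (by rwa [← add_assoc])]
  refine neg_mem (add_mem (mem_of_fix _ ?_) (mem_of_swap _ ?_))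
  · simp [hca, hσi]
  · simp [hcb, hca, hσi]

end PermArgs

/-- If a multilinear map `f(x, y, z₁, …, z_n)` is symmetric in
`x, y` (positions 0 and 1) and the cyclic sum of `f` over each triple
`{x, y, zᵢ}` vanishes, then every permuted copy `f^σ` lies in the span of
the permuted copies `f^τ` with `τ` fixing the variable `x` (position 0). -/
theorem stmt17 {F : Type*} [Field F] {V W : Type*}
    [AddCommGroup V] [Module F V] [AddCommGroup W] [Module F W]
    (n : ℕ) (f : MultilinearMap F (fun _ : Fin (n + 2) => V) W)
    (hsym : ∀ v : Fin (n + 2) → V, f (fun j => v (Equiv.swap 0 1 j)) = f v)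
    (hcyc : ∀ i : Fin (n + 2), 1 < i → ∀ v : Fin (n + 2) → V,
      f v + f (fun j => v ((Equiv.swap 0 1).trans (Equiv.swap 1 i) j))
        + f (fun j => v (((Equiv.swap 0 1).trans (Equiv.swap 1 i)).trans
            ((Equiv.swap 0 1).trans (Equiv.swap 1 i)) j)) = 0) :
    ∀ σ : Equiv.Perm (Fin (n + 2)),
      (fun v : Fin (n + 2) → V => f (fun j => v (σ j))) ∈
        Submodule.span F {g : (Fin (n + 2) → V) → W |
          ∃ τ : Equiv.Perm (Fin (n + 2)), τ 0 = 0 ∧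
            g = fun v => f (fun j => v (τ j))} := by
  refine permArgs_mem_span_fixing (by simp) (funext hsym) fun i hi0 hi1 => funext (hcyc i ?_)
  simp only [ne_eq, Fin.ext_iff, Fin.lt_def, Fin.val_zero, Fin.val_one] at hi0 hi1 ⊢
  omega
end

section
/- Let 𝒜′ = 𝒜′₀ ⊕ 𝒜′₁ be the 5-dimensional superalgebra with 𝒜′₀ = F·a, 𝒜′₁ = F·v + F·w + F·y + F·z and nonzero products z·z = a, y·a = v, z·a = w, y·v = v·y = a. Then 𝒜′ is metabelian, generated by the odd elements y and z, satisfies 𝒜′₀𝒜′ = 0 and [𝒜′₁,𝒜′₁] = 0, and w lies in the annihilator of 𝒜′. -/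
/-- The 5-dimensional superalgebra 𝒜' with basis {a; v,w,y,z} and
nonzero products z·z=a, y·a=v, z·a=w, y·v=v·y=a is metabelian, generated by the
odd elements y and z, satisfies 𝒜'₀𝒜' = 0 and [𝒜'₁,𝒜'₁] = 0, and w lies in its
annihilator. -/
theorem stmt18 {F : Type*} [Field F] (h2 : (2 : F) ≠ 0) (h3 : (3 : F) ≠ 0)
    {A : Type*} [NonUnitalNonAssocRing A] [Module F A]
    [SMulCommClass F A A] [IsScalarTower F A A]
    (a v w y z : A)
    (hspan : Submodule.span F ({a, v, w, y, z} : Set A) = ⊤)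
    (htable : ∀ i j : Fin 5, ![a, v, w, y, z] i * ![a, v, w, y, z] j =
      if (i, j) = (4, 4) then a
      else if (i, j) = (3, 0) then v
      else if (i, j) = (4, 0) then w
      else if (i, j) = (3, 1) then a
      else if (i, j) = (1, 3) then a
      else 0) :
    (∀ p ∈ Submodule.span F {u : A | ∃ c d : A, c * d = u},
      ∀ q ∈ Submodule.span F {u : A | ∃ c d : A, c * d = u}, p * q = 0) ∧
    NonUnitalAlgebra.adjoin F ({y, z} : Set A) = ⊤ ∧
    (∀ b ∈ Submodule.span F ({a} : Set A), ∀ c : A, b * c = 0) ∧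
    (∀ u ∈ Submodule.span F ({v, w, y, z} : Set A),
      ∀ u' ∈ Submodule.span F ({v, w, y, z} : Set A), u * u' - u' * u = 0) ∧
    (∀ c : A, w * c = 0 ∧ c * w = 0) := by
  -- extract the multiplication table
  have e00 : a * a = 0 := by simpa using htable 0 0
  have e01 : a * v = 0 := by simpa using htable 0 1
  have e02 : a * w = 0 := by simpa using htable 0 2
  have e03 : a * y = 0 := by simpa using htable 0 3
  have e04 : a * z = 0 := by simpa using htable 0 4
  have e10 : v * a = 0 := by simpa using htable 1 0
  have e11 : v * v = 0 := by simpa using htable 1 1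
  have e12 : v * w = 0 := by simpa using htable 1 2
  have e13 : v * y = a := by simpa using htable 1 3
  have e14 : v * z = 0 := by simpa using htable 1 4
  have e20 : w * a = 0 := by simpa using htable 2 0
  have e21 : w * v = 0 := by simpa using htable 2 1
  have e22 : w * w = 0 := by simpa using htable 2 2
  have e23 : w * y = 0 := by simpa using htable 2 3
  have e24 : w * z = 0 := by simpa using htable 2 4
  have e30 : y * a = v := by simpa using htable 3 0
  have e31 : y * v = a := by simpa using htable 3 1
  have e32 : y * w = 0 := by simpa using htable 3 2
  have e33 : y * y = 0 := by simpa using htable 3 3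
  have e34 : y * z = 0 := by simpa using htable 3 4
  have e40 : z * a = w := by simpa using htable 4 0
  have e41 : z * v = 0 := by simpa using htable 4 1
  have e42 : z * w = 0 := by simpa using htable 4 2
  have e43 : z * y = 0 := by simpa using htable 4 3
  have e44 : z * z = a := by simpa using htable 4 4
  have memtop : ∀ c : A, c ∈ Submodule.span F ({a, v, w, y, z} : Set A) := by
    intro c; rw [hspan]; trivial
  -- general helper: if p kills all basis elements on the right, p kills everything
  have mulR : ∀ p : A, p * a = 0 → p * v = 0 → p * w = 0 → p * y = 0 → p * z = 0 →
      ∀ c : A, p * c = 0 := by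
    intro p h1 h2 h3 h4 h5 c
    refine Submodule.span_induction ?_ ?_ ?_ ?_ (memtop c)
    · rintro x (rfl | rfl | rfl | rfl | rfl) <;> assumption
    · simp
    · intro x x' _ _ hx hx'; rw [mul_add, hx, hx', add_zero]
    · intro t x _ hx; rw [mul_smul_comm, hx, smul_zero]
  have mulL : ∀ p : A, a * p = 0 → v * p = 0 → w * p = 0 → y * p = 0 → z * p = 0 →
      ∀ c : A, c * p = 0 := by
    intro p h1 h2 h3 h4 h5 c
    refine Submodule.span_induction ?_ ?_ ?_ ?_ (memtop c)
    · rintro x (rfl | rfl | rfl | rfl | rfl) <;> assumption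
    · simp
    · intro x x' _ _ hx hx'; rw [add_mul, hx, hx', add_zero]
    · intro t x _ hx; rw [smul_mul_assoc, hx, smul_zero]
  have ha0 : ∀ c : A, a * c = 0 := mulR a e00 e01 e02 e03 e04
  have hw0 : ∀ c : A, w * c = 0 := mulR w e20 e21 e22 e23 e24
  have hw0' : ∀ c : A, c * w = 0 := mulL w e02 e12 e22 e32 e42
  -- the submodule spanned by a, v, w
  set S : Submodule F A := Submodule.span F ({a, v, w} : Set A) with hS
  have haS : a ∈ S := Submodule.subset_span (by simp)
  have hvS : v ∈ S := Submodule.subset_span (by simp)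
  have hwS : w ∈ S := Submodule.subset_span (by simp)
  -- every product lies in S
  have prodS : ∀ c d : A, c * d ∈ S := by
    intro c
    refine Submodule.span_induction (p := fun x _ => ∀ d : A, x * d ∈ S)
      ?_ ?_ ?_ ?_ (memtop c)
    · rintro x (rfl | rfl | rfl | rfl | rfl) <;> intro d <;>
      · refine Submodule.span_induction ?_ ?_ ?_ ?_ (memtop d)
        · rintro u (rfl | rfl | rfl | rfl | rfl) <;>
            simp only [e00, e01, e02, e03, e04, e10, e11, e12, e13, e14,
              e20, e21, e22, e23, e24, e30, e31, e32, e33, e34,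
              e40, e41, e42, e43, e44] <;>
            first
              | exact zero_mem _
              | exact haS
              | exact hvS
              | exact hwS
        · rw [mul_zero]; exact zero_mem _
        · intro u u' _ _ hu hu'; rw [mul_add]; exact add_mem hu hu'
        · intro t u _ hu; rw [mul_smul_comm]; exact S.smul_mem t hu
    · intro d; rw [zero_mul]; exact zero_mem _
    · intro x x' _ _ hx hx' d; rw [add_mul]; exact add_mem (hx d) (hx' d)
    · intro t x _ hx d; rw [smul_mul_assoc]; exact S.smul_mem t (hx d)
  -- v kills S on the right
  have hvS0 : ∀ q ∈ S, v * q = 0 := by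
    intro q hq
    refine Submodule.span_induction ?_ ?_ ?_ ?_ hq
    · rintro x (rfl | rfl | rfl) <;> assumption
    · simp
    · intro x x' _ _ hx hx'; rw [mul_add, hx, hx', add_zero]
    · intro t x _ hx; rw [mul_smul_comm, hx, smul_zero]
  -- S * S = 0
  have hSS : ∀ p ∈ S, ∀ q ∈ S, p * q = 0 := by
    intro p hp q hq
    refine Submodule.span_induction ?_ ?_ ?_ ?_ hp
    · rintro x (rfl | rfl | rfl)
      · exact ha0 q
      · exact hvS0 q hq
      · exact hw0 q
    · simp
    · intro x x' _ _ hx hx'; rw [add_mul, hx, hx', add_zero]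
    · intro t x _ hx; rw [smul_mul_assoc, hx, smul_zero]
  refine ⟨?_, ?_, ?_, ?_, fun c => ⟨hw0 c, hw0' c⟩⟩
  -- metabelian
  · have hle : Submodule.span F {u : A | ∃ c d : A, c * d = u} ≤ S := by
      rw [Submodule.span_le]
      rintro x ⟨c, d, rfl⟩
      exact prodS c d
    intro p hp q hq
    exact hSS p (hle hp) q (hle hq)
  -- generated by y and z
  · rw [eq_top_iff]
    intro x _
    have hy : y ∈ NonUnitalAlgebra.adjoin F ({y, z} : Set A) :=
      NonUnitalAlgebra.subset_adjoin F (by simp)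
    have hz : z ∈ NonUnitalAlgebra.adjoin F ({y, z} : Set A) :=
      NonUnitalAlgebra.subset_adjoin F (by simp)
    have haA : a ∈ NonUnitalAlgebra.adjoin F ({y, z} : Set A) := by
      rw [← e44]; exact mul_mem hz hz
    have hvA : v ∈ NonUnitalAlgebra.adjoin F ({y, z} : Set A) := by
      rw [← e30]; exact mul_mem hy haA
    have hwA : w ∈ NonUnitalAlgebra.adjoin F ({y, z} : Set A) := by
      rw [← e40]; exact mul_mem hz haA
    refine Submodule.span_induction ?_ ?_ ?_ ?_ (memtop x)
    · rintro u (rfl | rfl | rfl | rfl | rfl) <;> assumption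
    · exact zero_mem _
    · intro u u' _ _ hu hu'; exact add_mem hu hu'
    · intro t u _ hu; exact SMulMemClass.smul_mem t hu
  -- a annihilates on the left
  · intro b hb c
    refine Submodule.span_induction ?_ ?_ ?_ ?_ hb
    · rintro x rfl; exact ha0 c
    · simp
    · intro x x' _ _ hx hx'; rw [add_mul, hx, hx', add_zero]
    · intro t x _ hx; rw [smul_mul_assoc, hx, smul_zero]
  -- odd part commutes
  · have comm : ∀ u ∈ Submodule.span F ({v, w, y, z} : Set A),
        ∀ u' ∈ Submodule.span F ({v, w, y, z} : Set A), u * u' = u' * u := by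
      intro u hu
      refine Submodule.span_induction
        (p := fun x _ => ∀ u' ∈ Submodule.span F ({v, w, y, z} : Set A), x * u' = u' * x)
        ?_ ?_ ?_ ?_ hu
      · rintro x (rfl | rfl | rfl | rfl) <;> intro u' hu' <;>
        · refine Submodule.span_induction ?_ ?_ ?_ ?_ hu'
          · rintro s (rfl | rfl | rfl | rfl) <;>
              simp only [e11, e12, e13, e14, e21, e22, e23, e24,
                e31, e32, e33, e34, e41, e42, e43, e44]
          · rw [mul_zero, zero_mul]
          · intro s s' _ _ hs hs'; rw [mul_add, add_mul, hs, hs']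
          · intro t s _ hs; rw [mul_smul_comm, smul_mul_assoc, hs]
      · intro u' _; rw [mul_zero, zero_mul]
      · intro x x' _ _ hx hx' u' hu'
        rw [add_mul, mul_add, hx u' hu', hx' u' hu']
      · intro t x _ hx u' hu'
        rw [smul_mul_assoc, mul_smul_comm, hx u' hu']
    intro u hu u' hu'
    rw [comm u hu u' hu', sub_self]
end
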